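/- Let R be a ring with local units, P a locally projective unitary left R-module, and S a subring of End_R(P) such that P is a unitary right S-module, S·End_R(P) = S, and Pf is a finitely generated left R-module for every idempotent f ∈ S. If N is an injective object in RMod with st_P(N) = 0, then SHom_R(P,N) is an injective object in SMod. -/

import Mathlib

set_option linter.unusedVariables false

/-! ### Core: non-unital rings with local units, modules, homomorphisms, categories -/

universe u v w

open MulOpposite CategoryTheory

/-- A ring with local units: every finite subset is contained in a subring
of the form `eRe` for an idempotent `e`; equivalently, every finite subset
admits an idempotent acting as a two-sided identity on it. -/
class HasLocalUnits (R : Type u) [NonUnitalRing R] : Prop where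
  exists_unit : ∀ s : Finset R, ∃ e : R, e * e = e ∧ ∀ x ∈ s, e * x = x ∧ x * e = x

/-- A (left) module over a non-unital ring. -/
class LMod (R : Type u) [NonUnitalRing R] (M : Type v) [AddCommGroup M] extends SMul R M where
  smul_add' : ∀ (r : R) (m n : M), r • (m + n) = r • m + r • n
  add_smul' : ∀ (r s : R) (m : M), (r + s) • m = r • m + s • m
  mul_smul' : ∀ (r s : R) (m : M), (r * s) • m = r • (s • m)

section basic
variable {R : Type u} [NonUnitalRing R] {M : Type v} [AddCommGroup M] [LMod R M]

theorem LMod.smul_zero' (r : R) : r • (0 : M) = 0 := by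
  have h := LMod.smul_add' r (0 : M) 0
  rw [add_zero] at h
  have h2 : r • (0 : M) + r • (0 : M) = r • (0 : M) + 0 := by rw [← h, add_zero]
  exact add_left_cancel h2

theorem LMod.zero_smul' (m : M) : (0 : R) • m = 0 := by
  have h := LMod.add_smul' (0 : R) 0 m
  rw [add_zero] at h
  have h2 : (0 : R) • m + (0 : R) • m = (0 : R) • m + 0 := by rw [← h, add_zero]
  exact add_left_cancel h2

theorem LMod.smul_neg' (r : R) (m : M) : r • (-m) = -(r • m) := by
  have h : r • m + r • (-m) = 0 := by
    rw [← LMod.smul_add' r m (-m), add_neg_cancel, LMod.smul_zero']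
  exact eq_neg_of_add_eq_zero_right h

end basic

/-- `f : M → N` is a homomorphism of (non-unital) `R`-modules. -/
structure IsLHom (R : Type u) [NonUnitalRing R] {M : Type v} {N : Type w}
    [AddCommGroup M] [AddCommGroup N] [LMod R M] [LMod R N] (f : M → N) : Prop where
  map_add : ∀ x y, f (x + y) = f x + f y
  map_smul : ∀ (r : R) (x : M), f (r • x) = r • f x

theorem IsLHom.map_zero {R : Type u} [NonUnitalRing R] {M : Type v} {N : Type w}
    [AddCommGroup M] [AddCommGroup N] [LMod R M] [LMod R N] {f : M → N}
    (hf : IsLHom R f) : f 0 = 0 := by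
  have h := hf.map_add 0 0
  rw [add_zero] at h
  have h2 : f 0 + f 0 = f 0 + 0 := by rw [← h, add_zero]
  exact add_left_cancel h2

theorem IsLHom.map_neg {R : Type u} [NonUnitalRing R] {M : Type v} {N : Type w}
    [AddCommGroup M] [AddCommGroup N] [LMod R M] [LMod R N] {f : M → N}
    (hf : IsLHom R f) (x : M) : f (-x) = -(f x) := by
  have h : f x + f (-x) = 0 := by rw [← hf.map_add, add_neg_cancel, hf.map_zero]
  exact eq_neg_of_add_eq_zero_right h

/-- The type of homomorphisms of (non-unital) `R`-modules. -/
def LinMap (R : Type u) [NonUnitalRing R] (M : Type v) (N : Type w)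
    [AddCommGroup M] [AddCommGroup N] [LMod R M] [LMod R N] : Type (max v w) :=
  {f : M → N // IsLHom R f}

namespace LinMap

variable {R : Type u} [NonUnitalRing R] {M : Type v} {N : Type w}
    [AddCommGroup M] [AddCommGroup N] [LMod R M] [LMod R N]

theorem ext {f g : LinMap R M N} (h : f.1 = g.1) : f = g := Subtype.ext h

instance : Add (LinMap R M N) :=
  ⟨fun f g => ⟨fun x => f.1 x + g.1 x,
    ⟨fun x y => by rw [f.2.map_add, g.2.map_add]; abel,
     fun r x => by rw [f.2.map_smul, g.2.map_smul, LMod.smul_add']⟩⟩⟩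

instance : Zero (LinMap R M N) :=
  ⟨⟨fun _ => 0, ⟨fun _ _ => by rw [add_zero], fun r _ => (LMod.smul_zero' r).symm⟩⟩⟩

instance : Neg (LinMap R M N) :=
  ⟨fun f => ⟨fun x => -(f.1 x),
    ⟨fun x y => by rw [f.2.map_add]; abel,
     fun r x => by rw [f.2.map_smul, LMod.smul_neg']⟩⟩⟩

instance : AddCommGroup (LinMap R M N) where
  add_assoc f g h := ext (funext fun x => add_assoc _ _ _)
  zero_add f := ext (funext fun x => zero_add _)
  add_zero f := ext (funext fun x => add_zero _)
  add_comm f g := ext (funext fun x => add_comm _ _)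
  neg_add_cancel f := ext (funext fun x => neg_add_cancel _)
  nsmul := nsmulRec
  zsmul := zsmulRec

@[simp] theorem add_apply (f g : LinMap R M N) (x : M) : (f + g).1 x = f.1 x + g.1 x := rfl
@[simp] theorem zero_apply (x : M) : (0 : LinMap R M N).1 x = 0 := rfl
@[simp] theorem neg_apply (f : LinMap R M N) (x : M) : (-f).1 x = -(f.1 x) := rfl

end LinMap

/-- The endomorphism ring of a module over a non-unital ring, with the
"diagrammatic" multiplication `(f * g) x = g (f x)` (i.e. `f * g` means
"first `f`, then `g`", matching homomorphisms written on the right). -/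
instance LinMap.instNonUnitalRing {R : Type u} [NonUnitalRing R] {M : Type v}
    [AddCommGroup M] [LMod R M] : NonUnitalRing (LinMap R M M) :=
  { (inferInstance : AddCommGroup (LinMap R M M)) with
    mul := fun f g => ⟨fun x => g.1 (f.1 x),
      ⟨fun x y => by rw [f.2.map_add, g.2.map_add], fun r x => by rw [f.2.map_smul, g.2.map_smul]⟩⟩
    left_distrib := fun f g h => LinMap.ext (funext fun x => rfl)
    right_distrib := fun f g h => LinMap.ext (funext fun x => h.2.map_add _ _)
    zero_mul := fun f => LinMap.ext (funext fun x => f.2.map_zero)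
    mul_zero := fun f => LinMap.ext (funext fun x => rfl)
    mul_assoc := fun f g h => LinMap.ext (funext fun x => rfl) }

@[simp] theorem LinMap.mul_apply {R : Type u} [NonUnitalRing R] {M : Type v}
    [AddCommGroup M] [LMod R M] (f g : LinMap R M M) (x : M) : (f * g).1 x = g.1 (f.1 x) := rfl

/-- A module `M` over a non-unital ring `R` is unitary if `RM = M`. -/
def IsUnitary (R : Type u) [NonUnitalRing R] (M : Type v) [AddCommGroup M] [LMod R M] : Prop :=
  ∀ m : M, m ∈ AddSubgroup.closure {x : M | ∃ (r : R) (n : M), x = r • n}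

/-- The `R`-submodule (as an additive subgroup) generated by a subset. -/
def lspan (R : Type u) [NonUnitalRing R] {M : Type v} [AddCommGroup M] [LMod R M]
    (X : Set M) : AddSubgroup M :=
  AddSubgroup.closure (X ∪ {m | ∃ (r : R) (x : M), x ∈ X ∧ m = r • x})

/-- A subset `A` of a module is finitely generated (as an `R`-submodule). -/
def IsFGSet (R : Type u) [NonUnitalRing R] {M : Type v} [AddCommGroup M] [LMod R M]
    (A : Set M) : Prop :=
  ∃ s : Finset M, (↑s : Set M) ⊆ A ∧ ∀ a ∈ A, a ∈ lspan R (↑s : Set M)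

/-- A finitely generated module over a non-unital ring. -/
def IsFG (R : Type u) [NonUnitalRing R] (M : Type v) [AddCommGroup M] [LMod R M] : Prop :=
  ∃ s : Finset M, ∀ m : M, m ∈ lspan R (↑s : Set M)

/-- The category of unitary left modules over a ring with local units
(objects: unitary left `R`-modules). -/
structure UMod (R : Type u) [NonUnitalRing R] : Type (max u (v + 1)) where
  carrier : Type v
  [grp : AddCommGroup carrier]
  [mod : LMod R carrier]
  unitary : IsUnitary R carrier

attribute [instance] UMod.grp UMod.mod

instance {R : Type u} [NonUnitalRing R] : CoeSort (UMod.{u, v} R) (Type v) := ⟨UMod.carrier⟩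

instance UMod.instCategory {R : Type u} [NonUnitalRing R] : Category (UMod.{u, v} R) where
  Hom M N := LinMap R M.carrier N.carrier
  id M := ⟨fun x => x, ⟨fun _ _ => rfl, fun _ _ => rfl⟩⟩
  comp f g := ⟨fun x => g.1 (f.1 x),
    ⟨fun x y => by rw [f.2.map_add, g.2.map_add], fun r x => by rw [f.2.map_smul, g.2.map_smul]⟩⟩
  id_comp f := LinMap.ext rfl
  comp_id f := LinMap.ext rfl
  assoc f g h := LinMap.ext rfl

@[simp] theorem UMod.comp_apply {R : Type u} [NonUnitalRing R] {M N K : UMod.{u, v} R}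
    (f : M ⟶ N) (g : N ⟶ K) (x : M.carrier) : (f ≫ g).1 x = g.1 (f.1 x) := rfl

@[simp] theorem UMod.id_apply {R : Type u} [NonUnitalRing R] {M : UMod.{u, v} R}
    (x : M.carrier) : (𝟙 M : M ⟶ M).1 x = x := rfl

instance UMod.instPreadditive {R : Type u} [NonUnitalRing R] :
    Preadditive (UMod.{u, v} R) where
  homGroup M N := inferInstanceAs (AddCommGroup (LinMap R M.carrier N.carrier))
  add_comp M N K f f' g := LinMap.ext (funext fun x => g.2.map_add _ _)
  comp_add M N K f g g' := LinMap.ext (funext fun x => rfl)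

/-- A unitary module `P` is a generator of the category of unitary left `R`-modules. -/
def IsGenerator (R : Type u) [NonUnitalRing R] (P : UMod.{u, v} R) : Prop :=
  ∀ (M B : UMod.{u, v} R) (f g : M ⟶ B), f ≠ g → ∃ h : P ⟶ M, h ≫ f ≠ h ≫ g

/-- A set of unitary modules is a cogenerating set for the category of
unitary left `R`-modules. -/
def IsCogenSet (R : Type u) [NonUnitalRing R] (𝒰 : Set (UMod.{u, v} R)) : Prop :=
  ∀ (B M : UMod.{u, v} R) (f g : B ⟶ M), f ≠ g → ∃ U' ∈ 𝒰, ∃ h : M ⟶ U', f ≫ h ≠ g ≫ h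
/-! ### The largest unitary submodule `C·H` of a module `H`, and induced
module structures on hom-groups -/

section umax

variable (C : Type u) [NonUnitalRing C] (H : Type v) [AddCommGroup H] [LMod C H]

/-- `C·H`, the largest unitary `C`-submodule of the `C`-module `H`. -/
def umax : AddSubgroup H :=
  AddSubgroup.closure {h : H | ∃ (c : C) (h' : H), h = c • h'}

variable {C H}

theorem smul_mem_umax (c : C) (h : H) : c • h ∈ umax C H :=
  AddSubgroup.subset_closure ⟨c, h, rfl⟩

/-- An additive, `C`-equivariant map carries `C·H` into `C·H'`. -/
theorem umax_mapsTo {H' : Type w} [AddCommGroup H'] [LMod C H'] (T : H → H')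
    (hadd : ∀ x y, T (x + y) = T x + T y) (hsmul : ∀ (c : C) (x : H), T (c • x) = c • T x)
    {h : H} (hh : h ∈ umax C H) : T h ∈ umax C H' := by
  have hT : IsLHom C T := ⟨hadd, hsmul⟩
  induction hh using AddSubgroup.closure_induction with
  | mem x hx =>
    obtain ⟨c, h', rfl⟩ := hx
    rw [hsmul]; exact smul_mem_umax c (T h')
  | zero => rw [hT.map_zero]; exact (umax C H').zero_mem
  | add x y hx hy ihx ihy => rw [hadd]; exact (umax C H').add_mem ihx ihy
  | neg x hx ihx => rw [hT.map_neg]; exact (umax C H').neg_mem ihx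

instance umax.instLMod : LMod C ↥(umax C H) where
  smul c h := ⟨c • h.1, smul_mem_umax c h.1⟩
  smul_add' c m n := Subtype.ext (LMod.smul_add' c m.1 n.1)
  add_smul' c c' m := Subtype.ext (LMod.add_smul' c c' m.1)
  mul_smul' c c' m := Subtype.ext (LMod.mul_smul' c c' m.1)

@[simp] theorem umax.smul_coe (c : C) (h : ↥(umax C H)) : (c • h).1 = c • h.1 := rfl

/-- If a second ring `D` acts on `H` commuting with the `C`-action,
then `C·H` is stable under the `D`-action. -/
theorem umax_stable {D : Type w} [NonUnitalRing D] [LMod D H] [SMulCommClass C D H]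
    (d : D) {h : H} (hh : h ∈ umax C H) : d • h ∈ umax C H :=
  umax_mapsTo (fun x => d • x) (fun x y => LMod.smul_add' d x y)
    (fun c x => (smul_comm c d x).symm) hh

instance umax.instLMod₂ {D : Type w} [NonUnitalRing D] [LMod D H] [SMulCommClass C D H] :
    LMod D ↥(umax C H) where
  smul d h := ⟨d • h.1, umax_stable d h.2⟩
  smul_add' d m n := Subtype.ext (LMod.smul_add' d m.1 n.1)
  add_smul' d d' m := Subtype.ext (LMod.add_smul' d d' m.1)
  mul_smul' d d' m := Subtype.ext (LMod.mul_smul' d d' m.1)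

instance umax.instSMulCommClass {D : Type w} [NonUnitalRing D] [LMod D H]
    [SMulCommClass C D H] : SMulCommClass C D ↥(umax C H) :=
  ⟨fun c d h => Subtype.ext (smul_comm c d h.1)⟩

/-- If `C` has local units, then `C·H` is a unitary `C`-module. -/
theorem umax_unitary [HasLocalUnits C] : IsUnitary C ↥(umax C H) := by
  intro m
  obtain ⟨h, hh⟩ := m
  induction hh using AddSubgroup.closure_induction with
  | mem x hx =>
    obtain ⟨c, h', rfl⟩ := hx
    obtain ⟨e, he, hec⟩ := HasLocalUnits.exists_unit {c}
    have hc := (hec c (Finset.mem_singleton_self c)).1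
    refine AddSubgroup.subset_closure ⟨e, ⟨c • h', smul_mem_umax c h'⟩, ?_⟩
    refine Subtype.ext ?_
    show c • h' = e • (c • h')
    rw [← LMod.mul_smul', hc]
  | zero =>
    have : (⟨(0 : H), (umax C H).zero_mem⟩ : ↥(umax C H)) = 0 := rfl
    rw [this]; exact AddSubgroup.zero_mem _
  | add x y hx hy ihx ihy =>
    have : (⟨x + y, (umax C H).add_mem hx hy⟩ : ↥(umax C H)) =
        ⟨x, hx⟩ + ⟨y, hy⟩ := rfl
    rw [this]; exact AddSubgroup.add_mem _ ihx ihy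
  | neg x hx ihx =>
    have : (⟨-x, (umax C H).neg_mem hx⟩ : ↥(umax C H)) = -⟨x, hx⟩ := rfl
    rw [this]; exact AddSubgroup.neg_mem _ ihx

end umax

section regular

variable (R : Type u) [NonUnitalRing R]

/-- The left regular module structure of a non-unital ring on itself. -/
instance NonUnitalRing.instLModSelf : LMod R R where
  smul := (· * ·)
  smul_add' := mul_add
  add_smul' := add_mul
  mul_smul' := mul_assoc

@[simp] theorem NonUnitalRing.smul_def (r s : R) : r • s = r * s := rfl

/-- The right regular module structure, as a left module over the opposite ring. -/
instance NonUnitalRing.instLModSelfOp : LMod Rᵐᵒᵖ R where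
  smul r s := s * r.unop
  smul_add' r m n := add_mul m n r.unop
  add_smul' r r' m := mul_add m r.unop r'.unop
  mul_smul' r r' m := (mul_assoc m r'.unop r.unop).symm

@[simp] theorem NonUnitalRing.op_smul_def (r : Rᵐᵒᵖ) (s : R) : r • s = s * r.unop := rfl

instance : SMulCommClass R Rᵐᵒᵖ R :=
  ⟨fun r s x => by
    show r * (x * s.unop) = (r * x) * s.unop
    rw [mul_assoc]⟩

/-- Local units pass to the opposite ring. -/
instance instHasLocalUnitsOp [HasLocalUnits R] : HasLocalUnits Rᵐᵒᵖ where
  exists_unit s := by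
    classical
    obtain ⟨e, he, h⟩ := HasLocalUnits.exists_unit (R := R) (s.image MulOpposite.unop)
    refine ⟨MulOpposite.op e, by rw [← MulOpposite.op_mul, he], fun x hx => ?_⟩
    have hx' := h x.unop (Finset.mem_image_of_mem MulOpposite.unop hx)
    constructor
    · conv_lhs => rw [← MulOpposite.op_unop x, ← MulOpposite.op_mul, hx'.2, MulOpposite.op_unop]
    · conv_lhs => rw [← MulOpposite.op_unop x, ← MulOpposite.op_mul, hx'.1, MulOpposite.op_unop]

end regular

section homact

variable {A B C : Type u} [NonUnitalRing A] [NonUnitalRing B] [NonUnitalRing C]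
variable {X : Type v} {Y : Type w} [AddCommGroup X] [AddCommGroup Y] [LMod B X] [LMod B Y]

/-- The action of `A` on `Hom_B(X, Y)` by precomposition with the right
`A`-action on `X` (homomorphisms written on the right: `(a • f) x = f (x·a)`). -/
instance LinMap.instLModPre [LMod Aᵐᵒᵖ X] [SMulCommClass B Aᵐᵒᵖ X] :
    LMod A (LinMap B X Y) where
  smul a f := ⟨fun x => f.1 (op a • x),
    ⟨fun x y => by rw [LMod.smul_add', f.2.map_add],
     fun r x => by rw [← smul_comm r (op a) x, f.2.map_smul]⟩⟩
  smul_add' a f g := LinMap.ext rfl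
  add_smul' a a' f := LinMap.ext (funext fun x => by
    show f.1 (op (a + a') • x) = f.1 (op a • x) + f.1 (op a' • x)
    rw [← f.2.map_add, ← LMod.add_smul']
    rfl)
  mul_smul' a a' f := LinMap.ext (funext fun x => by
    show f.1 (op (a * a') • x) = f.1 (op a' • (op a • x))
    rw [← LMod.mul_smul']
    rfl)

theorem LinMap.pre_smul_apply [LMod Aᵐᵒᵖ X] [SMulCommClass B Aᵐᵒᵖ X]
    (a : A) (f : LinMap B X Y) (x : X) : (a • f).1 x = f.1 (op a • x) := rfl

/-- The action of `C` on `Hom_B(X, Y)` by postcomposition with a commuting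
`C`-action on `Y`. -/
instance LinMap.instLModPost [LMod C Y] [SMulCommClass B C Y] :
    LMod C (LinMap B X Y) where
  smul c f := ⟨fun x => c • f.1 x,
    ⟨fun x y => by rw [f.2.map_add, LMod.smul_add'],
     fun r x => by rw [f.2.map_smul]; exact (smul_comm r c (f.1 x)).symm⟩⟩
  smul_add' c f g := LinMap.ext (funext fun x => LMod.smul_add' c (f.1 x) (g.1 x))
  add_smul' c c' f := LinMap.ext (funext fun x => LMod.add_smul' c c' (f.1 x))
  mul_smul' c c' f := LinMap.ext (funext fun x => LMod.mul_smul' c c' (f.1 x))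

theorem LinMap.post_smul_apply [LMod C Y] [SMulCommClass B C Y]
    (c : C) (f : LinMap B X Y) (x : X) : (c • f).1 x = c • (f.1 x) := rfl

/-- Pre- and postcomposition actions on hom-groups commute. -/
instance LinMap.instSMulCommClassPrePost [LMod Aᵐᵒᵖ X] [SMulCommClass B Aᵐᵒᵖ X]
    [LMod C Y] [SMulCommClass B C Y] : SMulCommClass A C (LinMap B X Y) :=
  ⟨fun a c f => LinMap.ext rfl⟩

end homact
/-! ### Split direct systems and direct limits of unitary modules -/

section dirsys

variable (R : Type u) [NonUnitalRing R]

/-- A split direct system of unitary left `R`-modules, indexed by a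
quasi-ordered set `(ι, rel)`: a direct system `(P_i, φ_{ij})` together with
splittings `ψ_{ji} : P_j → P_i` (for `i ≤ j`) such that `φ_{ij} ψ_{ji} = id`
and `ψ_{kj} ψ_{ji} = ψ_{ki}`. -/
structure SplitSystem (ι : Type w) (rel : ι → ι → Prop) : Type (max u w (v + 1)) where
  obj : ι → UMod.{u, v} R
  map : ∀ {i j : ι}, rel i j → (obj i ⟶ obj j)
  split : ∀ {i j : ι}, rel i j → (obj j ⟶ obj i)
  map_self : ∀ {i : ι} (h : rel i i) (x : (obj i).carrier), (map h).1 x = x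
  map_map : ∀ {i j k : ι} (hij : rel i j) (hjk : rel j k) (hik : rel i k)
    (x : (obj i).carrier), (map hjk).1 ((map hij).1 x) = (map hik).1 x
  split_map : ∀ {i j : ι} (h : rel i j) (x : (obj i).carrier),
    (split h).1 ((map h).1 x) = x
  split_split : ∀ {i j k : ι} (hij : rel i j) (hjk : rel j k) (hik : rel i k)
    (x : (obj k).carrier), (split hij).1 ((split hjk).1 x) = (split hik).1 x

/-- `P`, together with homomorphisms `φ_i : P_i → P`, is a direct limit of the
direct system `(P_i, φ_{ij})` (with directed index set): the `φ_i` are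
compatible, every element of `P` comes from some `P_i`, and everything killed
by `φ_i` is eventually killed in the system. -/
structure LimitCocone {ι : Type w} {rel : ι → ι → Prop} (D : SplitSystem.{u, v} R ι rel)
    (P : Type v) [AddCommGroup P] [LMod R P] : Type (max u w v) where
  incl : ∀ i, LinMap R (D.obj i).carrier P
  compat : ∀ {i j : ι} (h : rel i j) (x : (D.obj i).carrier),
    (incl j).1 ((D.map h).1 x) = (incl i).1 x
  exhaustive : ∀ x : P, ∃ (i : ι) (y : (D.obj i).carrier), (incl i).1 y = x
  eventually_zero : ∀ i (y : (D.obj i).carrier), (incl i).1 y = 0 →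
    ∃ j, ∃ h : rel i j, (D.map h).1 y = 0

/-- A unitary left `R`-module is locally projective if it is a direct limit of a
split direct system of finitely generated projective unitary left `R`-modules. -/
def IsLocallyProjective (P : Type v) [AddCommGroup P] [LMod R P] : Prop :=
  ∃ (ι : Type v) (rel : ι → ι → Prop),
    (∀ i, rel i i) ∧ (∀ {i j k}, rel i j → rel j k → rel i k) ∧
    Nonempty ι ∧ (∀ i j, ∃ k, rel i k ∧ rel j k) ∧
    ∃ (D : SplitSystem.{u, v} R ι rel) (_ : LimitCocone R D P),
      ∀ i, IsFG R (D.obj i).carrier ∧ CategoryTheory.Projective (D.obj i)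

variable {R}

/-- The transition maps `Ω_{ij} : End_R(P_i) → End_R(P_j)`, `α ↦ ψ_{ji} α φ_{ij}`,
of the direct system of endomorphism rings associated to a split direct system. -/
def SplitSystem.endTrans {ι : Type w} {rel : ι → ι → Prop}
    (D : SplitSystem.{u, v} R ι rel) {i j : ι} (h : rel i j)
    (a : LinMap R (D.obj i).carrier (D.obj i).carrier) :
    LinMap R (D.obj j).carrier (D.obj j).carrier :=
  ⟨fun x => (D.map h).1 (a.1 ((D.split h).1 x)),
   ⟨fun x y => by rw [(D.split h).2.map_add, a.2.map_add, (D.map h).2.map_add],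
    fun r x => by rw [(D.split h).2.map_smul, a.2.map_smul, (D.map h).2.map_smul]⟩⟩

end dirsys
/-! ### The functor `SHom_R(P,−)` and related constructions for a bimodule `P` -/

section shom

variable (R S : Type u) [NonUnitalRing R] [NonUnitalRing S]
variable (P : Type u) [AddCommGroup P] [LMod R P] [LMod Sᵐᵒᵖ P] [SMulCommClass R Sᵐᵒᵖ P]

/-- `SHom_R(P,M) = S·Hom_R(P,M)`, the largest unitary left `S`-submodule of
`Hom_R(P,M)`, as a type. -/
abbrev SHom (M : Type u) [AddCommGroup M] [LMod R M] : Type u :=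
  ↥(umax S (LinMap R P M))

variable {R S P}

/-- The action of `SHom_R(P,−)` on a homomorphism `g : M → N` (postcomposition). -/
def sHomMap {M N : Type u} [AddCommGroup M] [AddCommGroup N] [LMod R M] [LMod R N]
    (g : LinMap R M N) (α : SHom R S P M) : SHom R S P N :=
  ⟨⟨fun x => g.1 (α.1.1 x),
    ⟨fun x y => by rw [α.1.2.map_add, g.2.map_add],
     fun r x => by rw [α.1.2.map_smul, g.2.map_smul]⟩⟩,
   umax_mapsTo (C := S)
     (fun f => ⟨fun x => g.1 (f.1 x),
       ⟨fun x y => by rw [f.2.map_add, g.2.map_add],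
        fun r x => by rw [f.2.map_smul, g.2.map_smul]⟩⟩)
     (fun f f' => LinMap.ext (funext fun x => g.2.map_add _ _))
     (fun s f => LinMap.ext rfl) α.2⟩

theorem sHomMap_apply {M N : Type u} [AddCommGroup M] [AddCommGroup N] [LMod R M]
    [LMod R N] (g : LinMap R M N) (α : SHom R S P M) (x : P) :
    ((sHomMap g α).1).1 x = g.1 (α.1.1 x) := rfl

theorem sHomMap_add {M N : Type u} [AddCommGroup M] [AddCommGroup N] [LMod R M]
    [LMod R N] (g : LinMap R M N) (α β : SHom R S P M) :
    sHomMap g (α + β) = sHomMap g α + sHomMap g β :=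
  Subtype.ext (LinMap.ext (funext fun x =>
    show g.1 (α.1.1 x + β.1.1 x) = g.1 (α.1.1 x) + g.1 (β.1.1 x) from g.2.map_add _ _))

theorem sHomMap_smul {M N : Type u} [AddCommGroup M] [AddCommGroup N] [LMod R M]
    [LMod R N] (g : LinMap R M N) (s : S) (α : SHom R S P M) :
    sHomMap g (s • α) = s • sHomMap g α :=
  Subtype.ext (LinMap.ext (funext fun x => rfl))

/-- `SHom_R(P,g)` as a homomorphism of `S`-modules. -/
def sHomLin {M N : Type u} [AddCommGroup M] [AddCommGroup N] [LMod R M] [LMod R N]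
    (g : LinMap R M N) : LinMap S (SHom R S P M) (SHom R S P N) :=
  ⟨sHomMap g, ⟨sHomMap_add g, fun s α => sHomMap_smul g s α⟩⟩

variable (R S P)

/-- The functor `SHom_R(P,−)` from unitary left `R`-modules to unitary left
`S`-modules. -/
def sHomF [HasLocalUnits S] : UMod.{u, u} R ⥤ UMod.{u, u} S where
  obj M := ⟨SHom R S P M.carrier, umax_unitary⟩
  map g := sHomLin g
  map_id M := LinMap.ext (funext fun α => Subtype.ext (LinMap.ext (funext fun x => rfl)))
  map_comp f g := LinMap.ext (funext fun α => Subtype.ext (LinMap.ext (funext fun x => rfl)))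

/-- `G_P = SHom_R(P,R)`, an `S`-`R`-bimodule. -/
abbrev GP : Type u := ↥(umax S (LinMap R P R))

/-- `RHom_S(G_P, N) = R·Hom_S(G_P, N)`, as a type. -/
abbrev RHomG (N : Type u) [AddCommGroup N] [LMod S N] : Type u :=
  ↥(umax R (LinMap S (GP R S P) N))

variable {R S P}

/-- The action of `RHom_S(G_P,−)` on a homomorphism of `S`-modules. -/
def rHomGMap {N N' : Type u} [AddCommGroup N] [AddCommGroup N'] [LMod S N] [LMod S N']
    (g : LinMap S N N') (α : RHomG R S P N) : RHomG R S P N' :=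
  ⟨⟨fun β => g.1 (α.1.1 β),
    ⟨fun x y => by rw [α.1.2.map_add, g.2.map_add],
     fun s x => by rw [α.1.2.map_smul, g.2.map_smul]⟩⟩,
   umax_mapsTo (C := R)
     (fun f => ⟨fun β => g.1 (f.1 β),
       ⟨fun x y => by rw [f.2.map_add, g.2.map_add],
        fun s x => by rw [f.2.map_smul, g.2.map_smul]⟩⟩)
     (fun f f' => LinMap.ext (funext fun β => g.2.map_add _ _))
     (fun r f => LinMap.ext rfl) α.2⟩

variable (R S P)

/-- The functor `RHom_S(G_P,−)` from unitary left `S`-modules to unitary left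
`R`-modules. -/
def rHomGF [HasLocalUnits R] : UMod.{u, u} S ⥤ UMod.{u, u} R where
  obj N := ⟨RHomG R S P N.carrier, umax_unitary⟩
  map g := ⟨rHomGMap g,
    ⟨fun α β => Subtype.ext (LinMap.ext (funext fun x =>
       show g.1 (α.1.1 x + β.1.1 x) = g.1 (α.1.1 x) + g.1 (β.1.1 x) from g.2.map_add _ _)),
     fun r α => Subtype.ext (LinMap.ext (funext fun x => rfl))⟩⟩
  map_id N := LinMap.ext (funext fun α => Subtype.ext (LinMap.ext (funext fun x => rfl)))
  map_comp f g := LinMap.ext (funext fun α => Subtype.ext (LinMap.ext (funext fun x => rfl)))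

variable {R S P}

/-- The inner component of the evaluation map `γ`: for `n ∈ N` and
`β ∈ Hom_R(P,R)`, the homomorphism `P → N`, `x ↦ (x)β·n`. -/
def gammaInner {N : Type u} [AddCommGroup N] [LMod R N] (n : N) (β : LinMap R P R) :
    LinMap R P N :=
  ⟨fun x => (β.1 x) • n,
   ⟨fun x y => by rw [β.2.map_add, LMod.add_smul'],
    fun r x => by rw [β.2.map_smul, NonUnitalRing.smul_def, LMod.mul_smul']⟩⟩

theorem gammaInner_mem {N : Type u} [AddCommGroup N] [LMod R N] (n : N)
    {β : LinMap R P R} (hβ : β ∈ umax S (LinMap R P R)) :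
    gammaInner n β ∈ umax S (LinMap R P N) :=
  umax_mapsTo (C := S) (fun β => gammaInner n β)
    (fun β β' => LinMap.ext (funext fun x => LMod.add_smul' _ _ _))
    (fun s β => LinMap.ext rfl) hβ

variable (R S P)

/-- The evaluation map `γ_N : N → RHom_S(G_P, SHom_R(P,N))` (before checking that
its values lie in the unitary part `R·Hom_S(G_P, SHom_R(P,N))`):
`n ↦ (β ↦ (x ↦ (x)β·n))`. -/
def gammaFun (N : Type u) [AddCommGroup N] [LMod R N] (n : N) :
    LinMap S (GP R S P) (SHom R S P N) :=
  ⟨fun β => ⟨gammaInner n β.1, gammaInner_mem n β.2⟩,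
   ⟨fun β β' => Subtype.ext (LinMap.ext (funext fun x => LMod.add_smul' _ _ _)),
    fun s β => Subtype.ext (LinMap.ext rfl)⟩⟩

/-- The `s`-trace `sTr(P,M) = Σ_{g ∈ SHom_R(P,M)} Im g` of `P` in `M`. -/
def sTrSub (M : Type u) [AddCommGroup M] [LMod R M] : AddSubgroup M :=
  AddSubgroup.closure {m : M | ∃ f : LinMap R P M, f ∈ umax S (LinMap R P M) ∧ ∃ x : P, m = f.1 x}

/-- `st_P(M) = 0`: the only `R`-submodule `K ⊆ M` with `SHom_R(P,K) = 0` is the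
zero submodule (equivalently, the sum of all such submodules is zero). -/
def stPZero (M : Type u) [AddCommGroup M] [LMod R M] : Prop :=
  ∀ K : AddSubgroup M, (∀ (r : R) (x : M), x ∈ K → r • x ∈ K) →
    (∀ (s : S) (f : LinMap R P M), (∀ x : P, f.1 x ∈ K) → s • f = 0) →
    ∀ m ∈ K, m = 0

/-- `SHom_R(P,X) = 0`. -/
def sHomZero (X : Type u) [AddCommGroup X] [LMod R X] : Prop :=
  ∀ f : LinMap R P X, f ∈ umax S (LinMap R P X) → f = 0

end shom
/-! ### Bimodules, dual hom functors, reflexivity, Morita duality bimodules,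
finiteness conditions -/

section bimod

variable (R S : Type u) [NonUnitalRing R] [NonUnitalRing S]

/-- A bundled `R`-`S`-bimodule over non-unital rings. -/
structure BimodLU : Type (u + 1) where
  carrier : Type u
  [grp : AddCommGroup carrier]
  [lmod : LMod R carrier]
  [rmod : LMod Sᵐᵒᵖ carrier]
  [comm : SMulCommClass R Sᵐᵒᵖ carrier]
  [comm' : SMulCommClass Sᵐᵒᵖ R carrier]

attribute [instance] BimodLU.grp BimodLU.lmod BimodLU.rmod BimodLU.comm BimodLU.comm'

variable (U : Type u) [AddCommGroup U] [LMod R U] [LMod Sᵐᵒᵖ U] [SMulCommClass R Sᵐᵒᵖ U]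
  [SMulCommClass Sᵐᵒᵖ R U]

/-- The canonical map `μ : S → End_R(U)`, `s ↦ (x ↦ x·s)`. -/
def muMap (s : S) : LinMap R U U :=
  ⟨fun x => op s • x,
   ⟨fun x y => LMod.smul_add' (op s) x y, fun r x => (smul_comm r (op s) x).symm⟩⟩

/-- The canonical map `λ : R → End_S(U)`, `r ↦ (x ↦ r·x)`. -/
def lambdaMap (r : R) : LinMap Sᵐᵒᵖ U U :=
  ⟨fun x => r • x,
   ⟨fun x y => LMod.smul_add' r x y, fun s x => smul_comm r s x⟩⟩

/-- `Hom_R(M,U)S`, the largest unitary right `S`-submodule of `Hom_R(M,U)`,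
as a type (a right `S`-module, i.e. a left `Sᵐᵒᵖ`-module). -/
abbrev DHomL (M : Type u) [AddCommGroup M] [LMod R M] : Type u :=
  ↥(umax Sᵐᵒᵖ (LinMap R M U))

/-- `RHom_S(N,U)`, the largest unitary left `R`-submodule of `Hom_S(N,U)`
for a right `S`-module `N`, as a type. -/
abbrev DHomR (N : Type u) [AddCommGroup N] [LMod Sᵐᵒᵖ N] : Type u :=
  ↥(umax R (LinMap Sᵐᵒᵖ N U))

variable {R S U}

/-- Action of the contravariant functor `Hom_R(−,U)S` on morphisms
(precomposition). -/
def dHomLMap {M N : Type u} [AddCommGroup M] [AddCommGroup N] [LMod R M] [LMod R N]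
    (f : LinMap R M N) (α : DHomL R S U N) : DHomL R S U M :=
  ⟨⟨fun x => α.1.1 (f.1 x),
    ⟨fun x y => by rw [f.2.map_add, α.1.2.map_add],
     fun r x => by rw [f.2.map_smul, α.1.2.map_smul]⟩⟩,
   umax_mapsTo (C := Sᵐᵒᵖ)
     (fun g => ⟨fun x => g.1 (f.1 x),
       ⟨fun x y => by rw [f.2.map_add, g.2.map_add],
        fun r x => by rw [f.2.map_smul, g.2.map_smul]⟩⟩)
     (fun g g' => LinMap.ext rfl) (fun s g => LinMap.ext rfl) α.2⟩

/-- Action of the contravariant functor `RHom_S(−,U)` on morphisms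
(precomposition). -/
def dHomRMap {M N : Type u} [AddCommGroup M] [AddCommGroup N] [LMod Sᵐᵒᵖ M]
    [LMod Sᵐᵒᵖ N] (f : LinMap Sᵐᵒᵖ M N) (α : DHomR R S U N) : DHomR R S U M :=
  ⟨⟨fun x => α.1.1 (f.1 x),
    ⟨fun x y => by rw [f.2.map_add, α.1.2.map_add],
     fun s x => by rw [f.2.map_smul, α.1.2.map_smul]⟩⟩,
   umax_mapsTo (C := R)
     (fun g => ⟨fun x => g.1 (f.1 x),
       ⟨fun x y => by rw [f.2.map_add, g.2.map_add],
        fun s x => by rw [f.2.map_smul, g.2.map_smul]⟩⟩)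
     (fun g g' => LinMap.ext rfl) (fun r g => LinMap.ext rfl) α.2⟩

variable (R S U)

/-- The contravariant functor `Hom_R(−,U)S` from unitary left `R`-modules to
unitary right `S`-modules. -/
def dualL [HasLocalUnits S] : (UMod.{u, u} R)ᵒᵖ ⥤ UMod.{u, u} Sᵐᵒᵖ where
  obj M := ⟨DHomL R S U M.unop.carrier, umax_unitary⟩
  map f := ⟨dHomLMap f.unop,
    ⟨fun α β => Subtype.ext (LinMap.ext (funext fun x => rfl)),
     fun s α => Subtype.ext (LinMap.ext (funext fun x => rfl))⟩⟩
  map_id M := LinMap.ext (funext fun α => Subtype.ext (LinMap.ext (funext fun x => rfl)))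
  map_comp f g := LinMap.ext (funext fun α => Subtype.ext (LinMap.ext (funext fun x => rfl)))

/-- The contravariant functor `RHom_S(−,U)` from unitary right `S`-modules to
unitary left `R`-modules. -/
def dualR [HasLocalUnits R] : (UMod.{u, u} Sᵐᵒᵖ)ᵒᵖ ⥤ UMod.{u, u} R where
  obj N := ⟨DHomR R S U N.unop.carrier, umax_unitary⟩
  map f := ⟨dHomRMap f.unop,
    ⟨fun α β => Subtype.ext (LinMap.ext (funext fun x => rfl)),
     fun r α => Subtype.ext (LinMap.ext (funext fun x => rfl))⟩⟩
  map_id N := LinMap.ext (funext fun α => Subtype.ext (LinMap.ext (funext fun x => rfl)))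
  map_comp f g := LinMap.ext (funext fun α => Subtype.ext (LinMap.ext (funext fun x => rfl)))

/-- The underlying function of the evaluation map
`φ_X : X → RHom_S(Hom_R(X,U)S, U)`, `(x)φ_X : β ↦ (x)β`. -/
def evalFunL (X : Type u) [AddCommGroup X] [LMod R X] (x : X) :
    LinMap Sᵐᵒᵖ (DHomL R S U X) U :=
  ⟨fun β => β.1.1 x, ⟨fun β β' => rfl, fun s β => rfl⟩⟩

/-- A unitary left `R`-module `X` is `U`-reflexive: the evaluation map
`φ_X : X → RHom_S(Hom_R(X,U)S, U)` is an isomorphism. -/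
def IsLReflexive (X : Type u) [AddCommGroup X] [LMod R X] : Prop :=
  ∃ h : ∀ x : X, evalFunL R S U X x ∈ umax R (LinMap Sᵐᵒᵖ (DHomL R S U X) U),
    Function.Bijective (fun x : X => (⟨evalFunL R S U X x, h x⟩ : DHomR R S U (DHomL R S U X)))

/-- The underlying function of the evaluation map
`ψ_Y : Y → Hom_R(RHom_S(Y,U),U)S`, `ψ_Y(y) : α ↦ α(y)`. -/
def evalFunR (Y : Type u) [AddCommGroup Y] [LMod Sᵐᵒᵖ Y] (y : Y) :
    LinMap R (DHomR R S U Y) U :=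
  ⟨fun α => α.1.1 y, ⟨fun α α' => rfl, fun r α => rfl⟩⟩

/-- A unitary right `S`-module `Y` is `U`-reflexive: the evaluation map
`ψ_Y : Y → Hom_R(RHom_S(Y,U),U)S` is an isomorphism. -/
def IsRReflexive (Y : Type u) [AddCommGroup Y] [LMod Sᵐᵒᵖ Y] : Prop :=
  ∃ h : ∀ y : Y, evalFunR R S U Y y ∈ umax Sᵐᵒᵖ (LinMap R (DHomR R S U Y) U),
    Function.Bijective (fun y : Y => (⟨evalFunR R S U Y y, h y⟩ : DHomL R S U (DHomR R S U Y)))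

/-- Properties (I) and (II) of a Morita duality bimodule: `U` is the direct
limit of a split direct system of finitely generated injective unitary left
`R`-modules whose members form a cogenerating set for the category of unitary
left `R`-modules, and `μ : S → End_R(U)` is a monomorphism whose image is
exactly the set of endomorphisms factoring through one of the induced
projections. -/
def SatisfiesI_II : Prop :=
  ∃ (ι : Type u) (rel : ι → ι → Prop),
    (∀ i, rel i i) ∧ (∀ {i j k}, rel i j → rel j k → rel i k) ∧
    Nonempty ι ∧ (∀ i j, ∃ k, rel i k ∧ rel j k) ∧
    ∃ (D : SplitSystem.{u, u} R ι rel) (c : LimitCocone R D U)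
      (proj : ∀ i, LinMap R U (D.obj i).carrier),
      (∀ i, IsFG R (D.obj i).carrier ∧ CategoryTheory.Injective (D.obj i)) ∧
      IsCogenSet R {M | ∃ i, M = D.obj i} ∧
      (∀ i (x : (D.obj i).carrier), (proj i).1 ((c.incl i).1 x) = x) ∧
      (∀ {i j} (h : rel i j) (x : U), (D.split h).1 ((proj j).1 x) = (proj i).1 x) ∧
      Function.Injective (muMap R S U) ∧
      Set.range (muMap R S U) =
        {g : LinMap R U U | ∃ (i : ι) (γ : LinMap R (D.obj i).carrier U),
          g.1 = fun x => γ.1 ((proj i).1 x)}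

/-- Properties (III) and (IV) of a Morita duality bimodule (the right-module
side, dual to (I) and (II)). -/
def SatisfiesIII_IV : Prop :=
  ∃ (ι : Type u) (rel : ι → ι → Prop),
    (∀ i, rel i i) ∧ (∀ {i j k}, rel i j → rel j k → rel i k) ∧
    Nonempty ι ∧ (∀ i j, ∃ k, rel i k ∧ rel j k) ∧
    ∃ (D : SplitSystem.{u, u} Sᵐᵒᵖ ι rel) (c : LimitCocone Sᵐᵒᵖ D U)
      (proj : ∀ i, LinMap Sᵐᵒᵖ U (D.obj i).carrier),
      (∀ i, IsFG Sᵐᵒᵖ (D.obj i).carrier ∧ CategoryTheory.Injective (D.obj i)) ∧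
      IsCogenSet Sᵐᵒᵖ {M | ∃ i, M = D.obj i} ∧
      (∀ i (x : (D.obj i).carrier), (proj i).1 ((c.incl i).1 x) = x) ∧
      (∀ {i j} (h : rel i j) (x : U), (D.split h).1 ((proj j).1 x) = (proj i).1 x) ∧
      Function.Injective (lambdaMap R S U) ∧
      Set.range (lambdaMap R S U) =
        {g : LinMap Sᵐᵒᵖ U U | ∃ (i : ι) (γ : LinMap Sᵐᵒᵖ (D.obj i).carrier U),
          g.1 = fun x => γ.1 ((proj i).1 x)}

/-- A Morita duality `R`-`S`-bimodule. -/
def IsMoritaDualityBimod : Prop :=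
  IsUnitary R U ∧ IsUnitary Sᵐᵒᵖ U ∧ SatisfiesI_II R S U ∧ SatisfiesIII_IV R S U

end bimod

section cats

variable (R : Type u) [NonUnitalRing R]

/-- The category of finitely generated unitary left `R`-modules. -/
abbrev FGMod := CategoryTheory.ObjectProperty.FullSubcategory (fun M : UMod.{u, u} R => IsFG R M.carrier)

/-- The category of finitely generated injective unitary left `R`-modules. -/
abbrev InjFGMod := CategoryTheory.ObjectProperty.FullSubcategory
  (fun M : UMod.{u, u} R => IsFG R M.carrier ∧ CategoryTheory.Injective M)

/-- The category of finitely generated projective unitary left `R`-modules. -/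
abbrev ProjFGMod := CategoryTheory.ObjectProperty.FullSubcategory
  (fun M : UMod.{u, u} R => IsFG R M.carrier ∧ CategoryTheory.Projective M)

/-- There is a duality (an additive contravariant equivalence) between the
categories of finitely generated unitary left `R`-modules and finitely
generated unitary right `S`-modules. -/
def ExistsFGDuality (R S : Type u) [NonUnitalRing R] [NonUnitalRing S] : Prop :=
  ∃ F : (FGMod R)ᵒᵖ ⥤ FGMod Sᵐᵒᵖ, F.Additive ∧ F.IsEquivalence

/-- Bundled ring with local units. -/
structure RingLU : Type (u + 1) where
  carrier : Type u
  [ring : NonUnitalRing carrier]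
  [lu : HasLocalUnits carrier]

attribute [instance] RingLU.ring RingLU.lu

/-- A ring with local units is left Morita if there is a ring `R'` with local
units and a duality from finitely generated unitary left `R`-modules to
finitely generated unitary right `R'`-modules. -/
def IsLeftMorita : Prop :=
  ∃ R' : RingLU.{u}, ExistsFGDuality R R'.carrier

/-- `R` is left locally finite: every finitely generated unitary left
`R`-module has finite length (equivalently, the lengths of chains of
submodules of such a module are bounded). -/
def IsLeftLocallyFinite : Prop :=
  ∀ (M : Type u) [AddCommGroup M] [LMod R M], IsUnitary R M → IsFG R M →
    ∃ n : ℕ, ∀ c : Fin (n + 1) → AddSubgroup M,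
      (∀ i (r : R) x, x ∈ c i → r • x ∈ c i) →
      ¬(∀ i : Fin n, c i.castSucc < c i.succ)

/-- `R` is left locally noetherian: every finitely generated unitary left
`R`-module is noetherian. -/
def IsLeftLocallyNoetherian : Prop :=
  ∀ (M : Type u) [AddCommGroup M] [LMod R M], IsUnitary R M → IsFG R M →
    ∀ c : ℕ → AddSubgroup M, (∀ i (r : R) x, x ∈ c i → r • x ∈ c i) →
      (∀ i, c i ≤ c (i + 1)) → ∃ n, ∀ m, n ≤ m → c m = c n

end cats

section principal

variable (R : Type u) [NonUnitalRing R]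

/-- The principal left ideal `Re` of a non-unital ring, for an element `e`. -/
def principalLeft (e : R) : AddSubgroup R where
  carrier := {y : R | ∃ r : R, y = r * e}
  add_mem' := by
    rintro a b ⟨r, hr⟩ ⟨s, hs⟩
    exact ⟨r + s, by rw [hr, hs, add_mul]⟩
  zero_mem' := ⟨0, by rw [zero_mul]⟩
  neg_mem' := by
    rintro a ⟨r, hr⟩
    exact ⟨-r, by rw [hr, neg_mul]⟩

instance (e : R) : LMod R ↥(principalLeft R e) where
  smul r y := ⟨r * y.1, by obtain ⟨s, hs⟩ := y.2; exact ⟨r * s, by rw [hs, mul_assoc]⟩⟩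
  smul_add' r m n := Subtype.ext (mul_add r m.1 n.1)
  add_smul' r s m := Subtype.ext (add_mul r s m.1)
  mul_smul' r s m := Subtype.ext (mul_assoc r s m.1)

/-- The principal right ideal `fS` of a non-unital ring, as a right module
(left module over the opposite ring). -/
def principalRight (f : R) : AddSubgroup R where
  carrier := {y : R | ∃ s : R, y = f * s}
  add_mem' := by
    rintro a b ⟨r, hr⟩ ⟨s, hs⟩
    exact ⟨r + s, by rw [hr, hs, mul_add]⟩
  zero_mem' := ⟨0, by rw [mul_zero]⟩
  neg_mem' := by
    rintro a ⟨r, hr⟩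
    exact ⟨-r, by rw [hr, mul_neg]⟩

instance (f : R) : LMod Rᵐᵒᵖ ↥(principalRight R f) where
  smul s y := ⟨y.1 * s.unop, by
    obtain ⟨t, ht⟩ := y.2; exact ⟨t * s.unop, by rw [ht, mul_assoc]⟩⟩
  smul_add' s m n := Subtype.ext (add_mul m.1 n.1 s.unop)
  add_smul' s t m := Subtype.ext (mul_add m.1 s.unop t.unop)
  mul_smul' s t m := Subtype.ext (mul_assoc m.1 t.unop s.unop).symm

end principal

section restr

variable (R S : Type u) [NonUnitalRing R] [NonUnitalRing S] [HasLocalUnits R] [HasLocalUnits S]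
variable (U : Type u) [AddCommGroup U] [LMod R U] [LMod Sᵐᵒᵖ U] [SMulCommClass R Sᵐᵒᵖ U]
  [SMulCommClass Sᵐᵒᵖ R U]

/-- The restriction of the contravariant functor `Hom_R(−,U)S` to finitely
generated modules, given that it preserves finite generation. -/
def dualLRestr (hFG : ∀ X : UMod.{u, u} R, IsFG R X.carrier →
    IsFG Sᵐᵒᵖ ((dualL R S U).obj (Opposite.op X)).carrier) :
    (FGMod R)ᵒᵖ ⥤ FGMod Sᵐᵒᵖ :=
  CategoryTheory.ObjectProperty.lift _
    ((CategoryTheory.ObjectProperty.ι _).op ⋙ dualL R S U)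
    (fun X => hFG X.unop.obj X.unop.property)

/-- The restriction of the contravariant functor `RHom_S(−,U)` to finitely
generated modules, given that it preserves finite generation. -/
def dualRRestr (hFG : ∀ Y : UMod.{u, u} Sᵐᵒᵖ, IsFG Sᵐᵒᵖ Y.carrier →
    IsFG R ((dualR R S U).obj (Opposite.op Y)).carrier) :
    (FGMod Sᵐᵒᵖ)ᵒᵖ ⥤ FGMod R :=
  CategoryTheory.ObjectProperty.lift _
    ((CategoryTheory.ObjectProperty.ι _).op ⋙ dualR R S U)
    (fun Y => hFG Y.unop.obj Y.unop.property)

end restr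
/-! ### Direct sums of modules over non-unital rings -/

section dfinsupp

variable {R : Type u} [NonUnitalRing R] {ι : Type v} {β : ι → Type w}
  [∀ i, AddCommGroup (β i)] [∀ i, LMod R (β i)]

/-- Pointwise scalar action on a direct sum. -/
def dfinsuppSMul (r : R) (f : Π₀ i, β i) : Π₀ i, β i :=
  f.mapRange (fun _ x => r • x) (fun _ => LMod.smul_zero' r)

theorem dfinsuppSMul_apply (r : R) (f : Π₀ i, β i) (i : ι) :
    dfinsuppSMul r f i = r • f i := DFinsupp.mapRange_apply _ _ f i

instance DFinsupp.instLMod : LMod R (Π₀ i, β i) where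
  smul := dfinsuppSMul
  smul_add' r f g := by
    ext i
    show dfinsuppSMul r (f + g) i = (dfinsuppSMul r f + dfinsuppSMul r g) i
    rw [DFinsupp.add_apply, dfinsuppSMul_apply, dfinsuppSMul_apply, dfinsuppSMul_apply,
      DFinsupp.add_apply]
    exact LMod.smul_add' r (f i) (g i)
  add_smul' r s f := by
    ext i
    show dfinsuppSMul (r + s) f i = (dfinsuppSMul r f + dfinsuppSMul s f) i
    rw [DFinsupp.add_apply, dfinsuppSMul_apply, dfinsuppSMul_apply, dfinsuppSMul_apply]
    exact LMod.add_smul' r s (f i)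
  mul_smul' r s f := by
    ext i
    show dfinsuppSMul (r * s) f i = dfinsuppSMul r (dfinsuppSMul s f) i
    rw [dfinsuppSMul_apply, dfinsuppSMul_apply, dfinsuppSMul_apply]
    exact LMod.mul_smul' r s (f i)

@[simp] theorem DFinsupp.lmod_smul_apply (r : R) (f : Π₀ i, β i) (i : ι) :
    (r • f) i = r • f i := dfinsuppSMul_apply r f i

end dfinsupp
/-! ### Miscellaneous helpers: submodule stability, `Pf`, traces, sums -/

section extra

variable {R : Type u} [NonUnitalRing R] {M : Type v} [AddCommGroup M] [LMod R M]

theorem closure_smul_stable {s : Set M}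
    (h : ∀ (r : R) (x : M), x ∈ s → r • x ∈ AddSubgroup.closure s) (r : R) {x : M}
    (hx : x ∈ AddSubgroup.closure s) : r • x ∈ AddSubgroup.closure s := by
  induction hx using AddSubgroup.closure_induction with
  | mem y hy => exact h r y hy
  | zero => rw [LMod.smul_zero']; exact AddSubgroup.zero_mem _
  | add y z hy hz ihy ihz => rw [LMod.smul_add']; exact AddSubgroup.add_mem _ ihy ihz
  | neg y hy ihy => rw [LMod.smul_neg']; exact AddSubgroup.neg_mem _ ihy

end extra

section pe

variable (R S : Type u) [NonUnitalRing R] [NonUnitalRing S]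
variable (P : Type u) [AddCommGroup P] [LMod R P] [LMod Sᵐᵒᵖ P] [SMulCommClass R Sᵐᵒᵖ P]

/-- The submodule `Pf = {x·f | x ∈ P}` of `P`, for `f ∈ S`. -/
def peSub (f : S) : AddSubgroup P where
  carrier := Set.range (fun x : P => (op f : Sᵐᵒᵖ) • x)
  add_mem' := by
    rintro a b ⟨x, rfl⟩ ⟨y, rfl⟩
    exact ⟨x + y, LMod.smul_add' (op f) x y⟩
  zero_mem' := ⟨0, LMod.smul_zero' _⟩
  neg_mem' := by
    rintro a ⟨x, rfl⟩
    exact ⟨-x, LMod.smul_neg' (op f) x⟩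

instance (f : S) : LMod R ↥(peSub S P f) where
  smul r y := ⟨r • y.1, by
    obtain ⟨x, hx⟩ := y.2
    exact ⟨r • x, by rw [← hx, smul_comm]⟩⟩
  smul_add' r m n := Subtype.ext (LMod.smul_add' r m.1 n.1)
  add_smul' r s m := Subtype.ext (LMod.add_smul' r s m.1)
  mul_smul' r s m := Subtype.ext (LMod.mul_smul' r s m.1)

variable {R S P} in
theorem sTrSub_smul_stable {M : Type u} [AddCommGroup M] [LMod R M] (r : R) {m : M}
    (hm : m ∈ sTrSub R S P M) : r • m ∈ sTrSub R S P M := by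
  refine closure_smul_stable (fun r' x hx => ?_) r hm
  obtain ⟨g, hg, y, rfl⟩ := hx
  exact AddSubgroup.subset_closure ⟨g, hg, r' • y, (g.2.map_smul r' y).symm⟩

instance (M : Type u) [AddCommGroup M] [LMod R M] : LMod R ↥(sTrSub R S P M) where
  smul r y := ⟨r • y.1, sTrSub_smul_stable r y.2⟩
  smul_add' r m n := Subtype.ext (LMod.smul_add' r m.1 n.1)
  add_smul' r s m := Subtype.ext (LMod.add_smul' r s m.1)
  mul_smul' r s m := Subtype.ext (LMod.mul_smul' r s m.1)

end pe

section sum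

/-- Summation over a direct sum against a family of additive maps
(the canonical map `⊕_I M_i → N`). -/
noncomputable def dfinsuppSum {ι : Type u} {β : ι → Type v} [∀ i, AddCommGroup (β i)]
    {γ : Type w} [AddCommGroup γ] (f : ∀ i, β i →+ γ) (x : Π₀ i, β i) : γ :=
  letI := Classical.decEq ι
  DFinsupp.sumAddHom f x

end sum
set_option linter.unusedSectionVars false

/-! ### Auxiliary lemmas: sums, units, principal modules, mono/epi -/

section aux1

variable {C : Type u} [NonUnitalRing C] {M : Type v} [AddCommGroup M] [LMod C M]

theorem LMod.sum_smul' {κ : Type w} (t : Finset κ) (a : κ → C) (m : M) :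
    (∑ k ∈ t, a k) • m = ∑ k ∈ t, (a k) • m := by
  classical
  induction t using Finset.induction_on with
  | empty => simp [LMod.zero_smul']
  | insert _ _ h ih => rw [Finset.sum_insert h, Finset.sum_insert h, LMod.add_smul', ih]

theorem LMod.smul_sum {κ : Type w} (r : C) (t : Finset κ) (m : κ → M) :
    r • (∑ k ∈ t, m k) = ∑ k ∈ t, r • (m k) := by
  classical
  induction t using Finset.induction_on with
  | empty => simp [LMod.smul_zero']
  | insert _ _ h ih => rw [Finset.sum_insert h, Finset.sum_insert h, LMod.smul_add', ih]

variable {M' : Type w} [AddCommGroup M'] [LMod C M']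

theorem IsLHom.map_sub {f : M → M'} (hf : IsLHom C f) (x y : M) :
    f (x - y) = f x - f y := by
  rw [sub_eq_add_neg, hf.map_add, hf.map_neg, sub_eq_add_neg]

theorem IsLHom.map_sum {f : M → M'} (hf : IsLHom C f) {κ : Type*} (t : Finset κ)
    (m : κ → M) : f (∑ k ∈ t, m k) = ∑ k ∈ t, f (m k) := by
  classical
  induction t using Finset.induction_on with
  | empty => simpa using hf.map_zero
  | insert _ _ h ih => rw [Finset.sum_insert h, Finset.sum_insert h, hf.map_add, ih]

theorem exists_idem_unit [HasLocalUnits C] (hu : IsUnitary C M) (m : M) :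
    ∃ e : C, e * e = e ∧ e • m = m := by
  classical
  have hm := hu m
  induction hm using AddSubgroup.closure_induction with
  | mem x hx =>
    obtain ⟨r, n, rfl⟩ := hx
    obtain ⟨e, hee, he⟩ := HasLocalUnits.exists_unit {r}
    exact ⟨e, hee, by rw [← LMod.mul_smul', (he r (Finset.mem_singleton_self r)).1]⟩
  | zero =>
    obtain ⟨e, hee, -⟩ := HasLocalUnits.exists_unit (∅ : Finset C)
    exact ⟨e, hee, LMod.smul_zero' e⟩
  | add x y hx hy ihx ihy =>
    obtain ⟨e₁, he₁, hx1⟩ := ihx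
    obtain ⟨e₂, he₂, hy2⟩ := ihy
    obtain ⟨e, hee, he⟩ := HasLocalUnits.exists_unit {e₁, e₂}
    refine ⟨e, hee, ?_⟩
    rw [LMod.smul_add']
    have h1 : e • x = x := by
      conv_lhs => rw [← hx1, ← LMod.mul_smul',
        (he e₁ (Finset.mem_insert_self e₁ {e₂})).1]
      exact hx1
    have h2 : e • y = y := by
      conv_lhs => rw [← hy2, ← LMod.mul_smul',
        (he e₂ (Finset.mem_insert_of_mem (Finset.mem_singleton_self e₂))).1]
      exact hy2
    rw [h1, h2]
  | neg x hx ihx =>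
    obtain ⟨e, hee, hx1⟩ := ihx
    exact ⟨e, hee, by rw [LMod.smul_neg', hx1]⟩

end aux1

section aux2

variable {C : Type u} [NonUnitalRing C] [HasLocalUnits C]

theorem principalLeft_unitary (e : C) : IsUnitary C ↥(principalLeft C e) := by
  intro a
  obtain ⟨u, huu, hu⟩ := HasLocalUnits.exists_unit {a.1}
  have h : a = u • a := Subtype.ext (hu a.1 (Finset.mem_singleton_self _)).1.symm
  have hmem : u • a ∈ AddSubgroup.closure
      {x : ↥(principalLeft C e) | ∃ (r : C) (n : ↥(principalLeft C e)), x = r • n} :=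
    AddSubgroup.subset_closure ⟨u, a, rfl⟩
  rwa [← h] at hmem

theorem UMod.mono_injective {X Y : UMod.{u, u} C} (g : X ⟶ Y) [Mono g] :
    Function.Injective g.1 := by
  intro a b hab
  by_contra hne
  have hz0 : a - b ≠ 0 := sub_ne_zero.mpr hne
  have hz : g.1 (a - b) = 0 := by rw [g.2.map_sub, hab, sub_self]
  obtain ⟨e, hee, hez⟩ := exists_idem_unit X.unitary (a - b)
  let E : UMod.{u, u} C := ⟨↥(principalLeft C e), principalLeft_unitary e⟩
  let φ : E ⟶ X := ⟨fun y => y.1 • (a - b),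
    ⟨fun y y' => LMod.add_smul' y.1 y'.1 (a - b),
     fun c y => LMod.mul_smul' c y.1 (a - b)⟩⟩
  have h1 : φ ≫ g = (0 : E ⟶ X) ≫ g := by
    apply LinMap.ext; funext y
    show g.1 (y.1 • (a - b)) = g.1 ((0 : LinMap C E.carrier X.carrier).1 y)
    rw [g.2.map_smul, hz, LMod.smul_zero']
    exact (g.2.map_zero).symm
  have h2 : φ = 0 := (cancel_mono g).mp h1
  have h3 : φ.1 ⟨e, ⟨e, hee.symm⟩⟩ = 0 := by rw [h2]; rfl
  have h4 : (⟨e, ⟨e, hee.symm⟩⟩ : ↥(principalLeft C e)).1 • (a - b) = 0 := h3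
  rw [hez] at h4
  exact hz0 h4

theorem UMod.mono_of_injective {X Y : UMod.{u, v} C} (g : X ⟶ Y)
    (h : Function.Injective g.1) : Mono g :=
  ⟨fun u v huv => LinMap.ext (funext fun x =>
    h (congrArg (fun m => m.1 x) huv))⟩

theorem UMod.epi_of_surjective {X Y : UMod.{u, v} C} (g : X ⟶ Y)
    (h : Function.Surjective g.1) : Epi g :=
  ⟨fun u v huv => LinMap.ext (funext fun y => by
    obtain ⟨x, rfl⟩ := h y
    exact congrArg (fun m => m.1 x) huv)⟩

end aux2
/-! ### The tensor product `P ⊗_C X` for a right `C`-module `P` and a left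
`C`-module `X`, over a non-unital ring `C`. -/

section tensor

variable (C : Type u) [NonUnitalRing C] (P : Type v) [AddCommGroup P] [LMod Cᵐᵒᵖ P]
  (X : Type w) [AddCommGroup X] [LMod C X]

/-- The subgroup of relations defining the tensor product. -/
def TRel : AddSubgroup (FreeAbelianGroup (P × X)) :=
  AddSubgroup.closure
    ({a | ∃ p p' x, a = FreeAbelianGroup.of (p + p', x) - FreeAbelianGroup.of (p, x) -
        FreeAbelianGroup.of (p', x)} ∪
     {a | ∃ p x x', a = FreeAbelianGroup.of (p, x + x') - FreeAbelianGroup.of (p, x) -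
        FreeAbelianGroup.of (p, x')} ∪
     {a | ∃ (p : P) (s : C) (x : X), a = FreeAbelianGroup.of ((op s) • p, x) -
        FreeAbelianGroup.of (p, s • x)})

/-- The tensor product `P ⊗_C X` as an abelian group. -/
def Ten : Type (max v w) := FreeAbelianGroup (P × X) ⧸ TRel C P X

instance : AddCommGroup (Ten C P X) :=
  inferInstanceAs (AddCommGroup (FreeAbelianGroup (P × X) ⧸ TRel C P X))

variable {C P X}

/-- The canonical image of a pure tensor. -/
def tmk (p : P) (x : X) : Ten C P X :=
  QuotientAddGroup.mk (FreeAbelianGroup.of (p, x))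

theorem tmk_add_left (p p' : P) (x : X) :
    (tmk (p + p') x : Ten C P X) = tmk p x + tmk p' x := by
  show QuotientAddGroup.mk _ = QuotientAddGroup.mk (FreeAbelianGroup.of (p, x) +
    FreeAbelianGroup.of (p', x))
  rw [QuotientAddGroup.eq_iff_sub_mem]
  apply AddSubgroup.subset_closure
  exact Or.inl (Or.inl ⟨p, p', x, by abel⟩)

theorem tmk_add_right (p : P) (x x' : X) :
    (tmk p (x + x') : Ten C P X) = tmk p x + tmk p x' := by
  show QuotientAddGroup.mk _ = QuotientAddGroup.mk (FreeAbelianGroup.of (p, x) +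
    FreeAbelianGroup.of (p, x'))
  rw [QuotientAddGroup.eq_iff_sub_mem]
  apply AddSubgroup.subset_closure
  exact Or.inl (Or.inr ⟨p, x, x', by abel⟩)

theorem tmk_smul (s : C) (p : P) (x : X) :
    (tmk ((op s) • p) x : Ten C P X) = tmk p (s • x) := by
  rw [show tmk p (s • x) = QuotientAddGroup.mk (FreeAbelianGroup.of (p, s • x)) from rfl]
  show QuotientAddGroup.mk _ = _
  rw [QuotientAddGroup.eq_iff_sub_mem]
  exact AddSubgroup.subset_closure (Or.inr ⟨p, s, x, rfl⟩)

theorem tmk_zero_left (x : X) : (tmk (0 : P) x : Ten C P X) = 0 := by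
  have h := tmk_add_left (C := C) (0 : P) 0 x
  rw [add_zero] at h
  exact left_eq_add.mp h

theorem tmk_zero_right (p : P) : (tmk p (0 : X) : Ten C P X) = 0 := by
  have h := tmk_add_right (C := C) p (0 : X) 0
  rw [add_zero] at h
  exact left_eq_add.mp h

theorem tmk_neg_left (p : P) (x : X) : (tmk (-p) x : Ten C P X) = -(tmk p x) := by
  have h := tmk_add_left (C := C) p (-p) x
  rw [add_neg_cancel, tmk_zero_left] at h
  exact eq_neg_of_add_eq_zero_right h.symm


theorem tmk_neg_right (p : P) (x : X) : (tmk p (-x) : Ten C P X) = -(tmk p x) := by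
  have h := tmk_add_right (C := C) p x (-x)
  rw [add_neg_cancel, tmk_zero_right] at h
  exact eq_neg_of_add_eq_zero_right h.symm

theorem tmk_sum_right (p : P) {κ : Type u_6} (t : Finset κ) (x : κ → X) :
    (tmk p (∑ k ∈ t, x k) : Ten C P X) = ∑ k ∈ t, tmk p (x k) := by
  classical
  induction t using Finset.induction_on with
  | empty => simpa using tmk_zero_right (C := C) p
  | insert _ _ h ih => rw [Finset.sum_insert h, Finset.sum_insert h, tmk_add_right, ih]

/-- Universal property: lifting a balanced biadditive map. -/

def tlift {B : Type u_4} [AddCommGroup B] (b : P → X → B)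
    (h1 : ∀ p p' x, b (p + p') x = b p x + b p' x)
    (h2 : ∀ p x x', b p (x + x') = b p x + b p x')
    (h3 : ∀ (p : P) (s : C) (x : X), b ((op s) • p) x = b p (s • x)) :
    Ten C P X →+ B :=
  QuotientAddGroup.lift (TRel C P X) (FreeAbelianGroup.lift (fun px => b px.1 px.2))
    (by
      have hker : TRel C P X ≤ (FreeAbelianGroup.lift
          (fun px : P × X => b px.1 px.2)).ker := by
        rw [TRel, AddSubgroup.closure_le]
        rintro a ((⟨p, p', x, rfl⟩ | ⟨p, x, x', rfl⟩) | ⟨p, s, x, rfl⟩) <;>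
          simp [AddMonoidHom.mem_ker, h1, h2, h3, sub_sub]
      intro a ha
      exact hker ha)

@[simp] theorem tlift_tmk {B : Type u_4} [AddCommGroup B] (b : P → X → B)
    (h1 : ∀ p p' x, b (p + p') x = b p x + b p' x)
    (h2 : ∀ p x x', b p (x + x') = b p x + b p x')
    (h3 : ∀ (p : P) (s : C) (x : X), b ((op s) • p) x = b p (s • x))
    (p : P) (x : X) : tlift b h1 h2 h3 (tmk p x) = b p x := by
  show FreeAbelianGroup.lift (fun px : P × X => b px.1 px.2) (FreeAbelianGroup.of (p, x)) = _
  rw [FreeAbelianGroup.lift_apply_of]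

/-- Induction principle for the tensor product. -/
theorem Ten.ind {motive : Ten C P X → Prop} (hmk : ∀ p x, motive (tmk p x))
    (hzero : motive 0) (hadd : ∀ a b, motive a → motive b → motive (a + b))
    (hneg : ∀ a, motive a → motive (-a)) : ∀ t, motive t := by
  intro t
  induction t using QuotientAddGroup.induction_on with
  | H a =>
    induction a using FreeAbelianGroup.induction_on with
    | zero => exact hzero
    | of px => exact hmk px.1 px.2
    | neg px _ => exact hneg _ (hmk px.1 px.2)
    | add a b ha hb => exact hadd _ _ ha hb

section taction

variable (R : Type u_5) [NonUnitalRing R] [LMod R P] [SMulCommClass R Cᵐᵒᵖ P]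

variable (C P X) in
/-- The action of `R` on the tensor product, through `P`. -/
def tsmulHom (r : R) : Ten C P X →+ Ten C P X :=
  tlift (fun p x => tmk (r • p) x)
    (fun p p' x => by
      show (tmk (r • (p + p')) x : Ten C P X) = tmk (r • p) x + tmk (r • p') x
      rw [LMod.smul_add', tmk_add_left])
    (fun p x x' => by
      show (tmk (r • p) (x + x') : Ten C P X) = tmk (r • p) x + tmk (r • p) x'
      rw [tmk_add_right])
    (fun p s x => by
      show (tmk (r • ((op s) • p)) x : Ten C P X) = tmk (r • p) (s • x)
      rw [smul_comm, tmk_smul])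

instance Ten.instLMod : LMod R (Ten C P X) :=
  { smul := fun r t => tsmulHom C P X R r t
    smul_add' := fun r m n => (tsmulHom C P X R r).map_add m n
    add_smul' := fun r s m => by
      show tsmulHom C P X R (r + s) m = tsmulHom C P X R r m + tsmulHom C P X R s m
      induction m using Ten.ind with
      | hmk p x =>
        simp only [tsmulHom, tlift_tmk]
        rw [LMod.add_smul', tmk_add_left]
      | hzero => rw [map_zero, map_zero, map_zero, add_zero]
      | hadd a b ha hb =>
        rw [map_add, map_add, map_add, ha, hb]; abel
      | hneg a ha => rw [map_neg, map_neg, map_neg, ha, neg_add]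
    mul_smul' := fun r s m => by
      show tsmulHom C P X R (r * s) m = tsmulHom C P X R r (tsmulHom C P X R s m)
      induction m using Ten.ind with
      | hmk p x =>
        simp only [tsmulHom, tlift_tmk]
        rw [LMod.mul_smul']
      | hzero => rw [map_zero, map_zero, map_zero]
      | hadd a b ha hb => rw [map_add, map_add, ha, hb, map_add]
      | hneg a ha => rw [map_neg, map_neg, ha, map_neg] }

theorem tsmul_tmk (r : R) (p : P) (x : X) :
    r • (tmk p x : Ten C P X) = tmk (r • p) x := by
  show tsmulHom C P X R r (tmk p x) = _
  rw [tsmulHom, tlift_tmk]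

theorem tlift_lhom {B : Type u_4} [AddCommGroup B] [LMod R B] (b : P → X → B)
    (h1 : ∀ p p' x, b (p + p') x = b p x + b p' x)
    (h2 : ∀ p x x', b p (x + x') = b p x + b p x')
    (h3 : ∀ (p : P) (s : C) (x : X), b ((op s) • p) x = b p (s • x))
    (hsm : ∀ (r : R) (p : P) (x : X), b (r • p) x = r • b p x) :
    IsLHom R (fun t => tlift b h1 h2 h3 t) := by
  refine ⟨fun a a' => (tlift b h1 h2 h3).map_add a a', fun r t => ?_⟩
  induction t using Ten.ind with
  | hmk p x => rw [tsmul_tmk R, tlift_tmk, tlift_tmk, hsm]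
  | hzero => rw [LMod.smul_zero', map_zero, LMod.smul_zero']
  | hadd a a' ha ha' => rw [LMod.smul_add', map_add, map_add, ha, ha', LMod.smul_add']
  | hneg a ha => rw [LMod.smul_neg', map_neg, map_neg, ha, LMod.smul_neg']

theorem Ten.unitary (hPu : IsUnitary R P) : IsUnitary R (Ten C P X) := by
  intro t
  induction t using Ten.ind with
  | hmk p x =>
    have hp := hPu p
    induction hp using AddSubgroup.closure_induction with
    | mem q hq =>
      obtain ⟨r, p', rfl⟩ := hq
      exact AddSubgroup.subset_closure ⟨r, tmk p' x, (tsmul_tmk R r p' x).symm⟩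
    | zero => rw [tmk_zero_left]; exact AddSubgroup.zero_mem _
    | add q q' _ _ ihq ihq' => rw [tmk_add_left]; exact AddSubgroup.add_mem _ ihq ihq'
    | neg q _ ihq => rw [tmk_neg_left]; exact AddSubgroup.neg_mem _ ihq
  | hzero => exact AddSubgroup.zero_mem _
  | hadd a b ha hb => exact AddSubgroup.add_mem _ ha hb
  | hneg a ha => exact AddSubgroup.neg_mem _ ha

end taction

end tensor
/-! ### The local dual basis lemma for a locally projective module -/

section dualbasis

variable {R : Type u} [NonUnitalRing R] [HasLocalUnits R]
  {P : Type u} [AddCommGroup P] [LMod R P]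

theorem dual_basis
    (hlp : IsLocallyProjective R P)
    (S : NonUnitalSubring (LinMap R P P))
    (hSEnd : ((AddSubgroup.closure
        {h : LinMap R P P | ∃ s ∈ S, ∃ g : LinMap R P P, h = s * g} :
        AddSubgroup (LinMap R P P)) : Set (LinMap R P P)) = ↑S)
    (hfg : ∀ f : LinMap R P P, f ∈ S → f * f = f → IsFGSet R (Set.range f.1))
    (e : LinMap R P P) (heS : e ∈ S) (hee : e * e = e) :
    ∃ (κ : Type u) (_ : Fintype κ) (ϑ : κ → P → R) (w : κ → P) (c : κ → P → ↥S),
      (∀ k q q', ϑ k (q + q') = ϑ k q + ϑ k q') ∧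
      (∀ k (r : R) q, ϑ k (r • q) = r * ϑ k q) ∧
      (∀ q, e.1 q = ∑ k, (ϑ k q) • (w k)) ∧
      (∀ k p' q, ((c k p' : LinMap R P P)).1 q = (ϑ k q) • p') := by
  classical
  obtain ⟨ι, rel, hrefl, htrans, hne, hdir, D, cc, hP⟩ := hlp
  obtain ⟨i0⟩ := hne
  obtain ⟨s0, hs0sub, hs0gen⟩ := hfg e heS hee
  choose idx elt helt using cc.exhaustive
  -- common upper bound for a finite set of indices
  have hub : ∀ t : Finset ι, ∃ i, ∀ j ∈ t, rel j i := by
    intro t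
    induction t using Finset.induction_on with
    | empty => exact ⟨i0, fun j hj => absurd hj (Finset.notMem_empty j)⟩
    | @insert a t ha ih =>
      obtain ⟨i1, hi1⟩ := ih
      obtain ⟨i2, h2a, h2b⟩ := hdir a i1
      refine ⟨i2, fun j hj => ?_⟩
      rcases Finset.mem_insert.mp hj with rfl | hj
      · exact h2a
      · exact htrans (hi1 j hj) h2b
  obtain ⟨i, hi⟩ := hub (s0.image idx)
  set ρ : LinMap R (D.obj i).carrier P := cc.incl i with hρ
  -- the range of ρ as a subgroup
  let Rng : AddSubgroup P := (AddMonoidHom.mk' ρ.1 ρ.2.map_add).range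
  have hmemRng : ∀ m : P, m ∈ Rng ↔ ∃ y, ρ.1 y = m := by
    intro m; exact AddMonoidHom.mem_range
  have hrng : ∀ x ∈ s0, x ∈ Rng := by
    intro x hx
    have hr : rel (idx x) i := hi _ (Finset.mem_image_of_mem idx hx)
    exact (hmemRng x).mpr ⟨(D.map hr).1 (elt x), by rw [hρ, cc.compat hr, helt]⟩
  have heq : ∀ q : P, e.1 q ∈ Rng := by
    intro q
    have h1 : e.1 q ∈ lspan R (↑s0 : Set P) := hs0gen _ ⟨q, rfl⟩
    have h2 : lspan R (↑s0 : Set P) ≤ Rng := by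
      rw [lspan]
      rw [AddSubgroup.closure_le]
      rintro m (hm | ⟨r, x, hx, rfl⟩)
      · exact hrng m hm
      · obtain ⟨y, hy⟩ := (hmemRng x).mp (hrng x hx)
        exact (hmemRng _).mpr ⟨r • y, by rw [ρ.2.map_smul, hy]⟩
    exact h2 h1
  -- injectivity of ρ
  have hinj : Function.Injective ρ.1 := by
    intro y y' hyy
    have h0 : ρ.1 (y - y') = 0 := by rw [ρ.2.map_sub, hyy, sub_self]
    obtain ⟨j, hj, hmap0⟩ := cc.eventually_zero i (y - y') h0
    have hsm := D.split_map hj (y - y')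
    rw [hmap0, (D.split hj).2.map_zero] at hsm
    exact sub_eq_zero.mp hsm.symm
  -- the partial inverse on the image of the action of e
  have hex2 : ∀ q : P, ∃ y, ρ.1 y = e.1 q := fun q => (hmemRng _).mp (heq q)
  choose hf hhf using hex2
  have hfadd : ∀ q q', hf (q + q') = hf q + hf q' := fun q q' =>
    hinj (by rw [hhf, ρ.2.map_add, hhf, hhf, e.2.map_add])
  have hfsm : ∀ (r : R) (q : P), hf (r • q) = r • hf q := fun r q =>
    hinj (by rw [hhf, ρ.2.map_smul, hhf, e.2.map_smul])
  have hfe : ∀ q, hf (e.1 q) = hf q := fun q =>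
    hinj (by rw [hhf, hhf]; exact congrArg (fun m => m.1 q) hee)
  -- finitely generated projective P_i
  obtain ⟨gi, hgi⟩ := (hP i).1
  have hproj := (hP i).2
  -- generators and their local units
  let κ : Type u := {x : (D.obj i).carrier // x ∈ gi}
  have hgu : ∀ k : κ, ∃ u : R, u * u = u ∧ u • k.1 = k.1 := fun k =>
    exists_idem_unit (D.obj i).unitary k.1
  choose uu huu1 huu2 using hgu
  -- the direct sum of principal left ideals
  let β : κ → Type u := fun k => ↥(principalLeft R (uu k))
  let DS : Type u := Π₀ k, β k
  have hDSu : IsUnitary R DS := by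
    intro fsupp
    obtain ⟨u, huu, hu⟩ := HasLocalUnits.exists_unit (fsupp.support.image fun k => (fsupp k).1)
    have hufeq : u • fsupp = fsupp := by
      ext k
      rw [DFinsupp.lmod_smul_apply]
      show ((u • fsupp k : β k) : R) = ((fsupp k : β k) : R)
      show u * (fsupp k : R) = (fsupp k : R)
      by_cases hk : k ∈ fsupp.support
      · exact (hu _ (Finset.mem_image_of_mem _ hk)).1
      · rw [DFinsupp.notMem_support_iff.mp hk]
        show u * ((0 : β k) : R) = ((0 : β k) : R)
        rw [ZeroMemClass.coe_zero, mul_zero]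
    have hmem : u • fsupp ∈ AddSubgroup.closure
        {x : DS | ∃ (r : R) (n : DS), x = r • n} :=
      AddSubgroup.subset_closure ⟨u, fsupp, rfl⟩
    rwa [hufeq] at hmem
  let DSobj : UMod.{u, u} R := ⟨DS, hDSu⟩
  -- the canonical surjection onto P_i
  let σh : DS →+ (D.obj i).carrier :=
    DFinsupp.sumAddHom (fun k => AddMonoidHom.mk'
      (fun a : β k => (a : R) • k.1)
      (fun a b => by
        show ((a + b : β k) : R) • k.1 = _
        have hcoe : ((a + b : β k) : R) = (a : R) + (b : R) := rfl
        rw [hcoe, LMod.add_smul']))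
  have hσsingle : ∀ (k : κ) (a : β k), σh (DFinsupp.single k a) = (a : R) • k.1 :=
    fun k a => DFinsupp.sumAddHom_single _ k a
  have hsingle_smul : ∀ (r : R) (k : κ) (a : β k),
      r • DFinsupp.single k a = DFinsupp.single k (r • a) := by
    intro r k a
    ext j
    rw [DFinsupp.lmod_smul_apply]
    by_cases hj : j = k
    · subst hj
      rw [DFinsupp.single_eq_same, DFinsupp.single_eq_same]
    · rw [DFinsupp.single_eq_of_ne hj, DFinsupp.single_eq_of_ne hj,
        LMod.smul_zero']
  have hσsm : ∀ (r : R) (fsupp : DS), σh (r • fsupp) = r • σh fsupp := by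
    intro r fsupp
    induction fsupp using DFinsupp.induction with
    | h0 => rw [LMod.smul_zero', map_zero, LMod.smul_zero']
    | ha k b f hfk hb ih =>
      rw [LMod.smul_add', map_add, map_add, ih, hsingle_smul, hσsingle, hσsingle]
      show ((r • b : β k) : R) • k.1 + _ = _
      have : ((r • b : β k) : R) = r * (b : R) := rfl
      rw [this, LMod.mul_smul', LMod.smul_add']
  let σm : DSobj ⟶ D.obj i := ⟨fun fsupp => σh fsupp, ⟨σh.map_add, hσsm⟩⟩
  have hσsurj : Function.Surjective σm.1 := by
    intro m
    have h1 : m ∈ lspan R (↑gi : Set (D.obj i).carrier) := hgi m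
    have h2 : lspan R (↑gi : Set (D.obj i).carrier) ≤ σh.range := by
      rw [lspan, AddSubgroup.closure_le]
      rintro m' (hm | ⟨r, x, hx, rfl⟩)
      · refine ⟨DFinsupp.single ⟨m', hm⟩ ⟨uu ⟨m', hm⟩, ⟨uu ⟨m', hm⟩, (huu1 _).symm⟩⟩, ?_⟩
        rw [hσsingle]
        exact huu2 ⟨m', hm⟩
      · refine ⟨DFinsupp.single ⟨x, hx⟩ ⟨r * uu ⟨x, hx⟩, ⟨r, rfl⟩⟩, ?_⟩
        rw [hσsingle]
        show (r * uu ⟨x, hx⟩) • x = r • x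
        rw [LMod.mul_smul', huu2 ⟨x, hx⟩]
    exact h2 h1
  haveI hepi : Epi σm := UMod.epi_of_surjective σm hσsurj
  obtain ⟨rr, hrr⟩ := hproj.factors (𝟙 (D.obj i)) σm
  have hrr' : ∀ y : (D.obj i).carrier, σh (rr.1 y) = y := by
    intro y
    exact congrArg (fun m => m.1 y) hrr
  -- the finite dual basis expansion on P_i
  have hσsum : ∀ fsupp : DS, σh fsupp = ∑ k : κ, ((fsupp k : R)) • k.1 := by
    intro fsupp
    rw [show σh fsupp = DFinsupp.sumAddHom _ fsupp from rfl, DFinsupp.sumAddHom_apply]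
    rw [DFinsupp.sum]
    refine Finset.sum_subset (Finset.subset_univ _) ?_
    intro k _ hk
    rw [DFinsupp.notMem_support_iff.mp hk]
    show ((0 : β k) : R) • k.1 = 0
    rw [ZeroMemClass.coe_zero, LMod.zero_smul']
  -- the coefficient functionals
  let th : κ → P → R := fun k q => ((rr.1 (hf q)) k : R)
  have hthadd : ∀ k q q', th k (q + q') = th k q + th k q' := by
    intro k q q'
    show ((rr.1 (hf (q + q'))) k : R) = ((rr.1 (hf q)) k : R) + ((rr.1 (hf q')) k : R)
    rw [hfadd, rr.2.map_add, DFinsupp.add_apply]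
    rfl
  have hthsm : ∀ k (r : R) q, th k (r • q) = r * th k q := by
    intro k r q
    show ((rr.1 (hf (r • q))) k : R) = r * ((rr.1 (hf q)) k : R)
    rw [hfsm, rr.2.map_smul, DFinsupp.lmod_smul_apply]
    rfl
  have hthe : ∀ k q, th k (e.1 q) = th k q := by
    intro k q
    show ((rr.1 (hf (e.1 q))) k : R) = _
    rw [hfe]
  -- the maps into S
  have hcex : ∀ (k : κ) (p' : P), ∃ c : ↥S,
      ∀ q, (c : LinMap R P P).1 q = (th k q) • p' := by
    intro k p'
    have hlh : IsLHom R (fun q => (th k q) • p') := by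
      refine ⟨fun q q' => ?_, fun r q => ?_⟩
      · rw [hthadd, LMod.add_smul']
      · rw [hthsm, LMod.mul_smul']
    set χ : LinMap R P P := ⟨fun q => (th k q) • p', hlh⟩ with hχ
    have h1 : χ = e * χ := by
      refine LinMap.ext (funext fun q => ?_)
      show (th k q) • p' = (th k (e.1 q)) • p'
      rw [hthe]
    have h2 : χ ∈ (AddSubgroup.closure
        {h : LinMap R P P | ∃ s ∈ S, ∃ g : LinMap R P P, h = s * g} :
        AddSubgroup (LinMap R P P)) :=
      AddSubgroup.subset_closure ⟨e, heS, χ, h1⟩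
    have h3 : χ ∈ (↑S : Set (LinMap R P P)) := by rw [← hSEnd]; exact h2
    exact ⟨⟨χ, h3⟩, fun q => rfl⟩
  choose cf hcf using hcex
  -- assemble
  refine ⟨κ, inferInstance, th, fun k => ρ.1 k.1, cf, hthadd, hthsm, ?_, ?_⟩
  · intro q
    have h1 : e.1 q = ρ.1 (hf q) := (hhf q).symm
    rw [h1]
    conv_lhs => rw [← hrr' (hf q), hσsum]
    rw [ρ.2.map_sum]
    refine Finset.sum_congr rfl fun k _ => ?_
    rw [ρ.2.map_smul]
  · exact fun k p' q => hcf k p' q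
/-! ## STATEMENT 11
If `N` is injective in `RMod` with `st_P(N) = 0`, then `SHom_R(P,N)` is
injective in `SMod`. -/
theorem sHom_injective_of_injective
    (R : Type u) [NonUnitalRing R] [HasLocalUnits R]
    (P : Type u) [AddCommGroup P] [LMod R P]
    (hPu : IsUnitary R P)
    (hlp : IsLocallyProjective R P)
    (S : NonUnitalSubring (LinMap R P P)) [HasLocalUnits ↥S]
    [LMod (↥S)ᵐᵒᵖ P] [SMulCommClass R (↥S)ᵐᵒᵖ P]
    (hact : ∀ (s : ↥S) (x : P), (MulOpposite.op s) • x = (s : LinMap R P P).1 x)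
    (hPS : IsUnitary (↥S)ᵐᵒᵖ P)
    (hSEnd : ((AddSubgroup.closure
        {h : LinMap R P P | ∃ s ∈ S, ∃ g : LinMap R P P, h = s * g} :
        AddSubgroup (LinMap R P P)) : Set (LinMap R P P)) = ↑S)
    (hfg : ∀ f : LinMap R P P, f ∈ S → f * f = f → IsFGSet R (Set.range f.1))
    (N : UMod.{u, u} R) (hinj : CategoryTheory.Injective N)
    (hst : stPZero R ↥S P N.carrier) :
    CategoryTheory.Injective ((sHomF R ↥S P).obj N) := by
  classical
  constructor
  intro X Y fq g hmono
  -- `g` is injective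
  have hginj : Function.Injective g.1 := UMod.mono_injective g
  -- the tensor products
  let TX := Ten ↥S P X.carrier
  let TY := Ten ↥S P Y.carrier
  -- the map `τ = P ⊗ g : TX → TY`
  let τ : TX →+ TY :=
    tlift (fun p x => tmk p (g.1 x))
      (fun p p' x => tmk_add_left p p' (g.1 x))
      (fun p x x' => by
        show (tmk p (g.1 (x + x')) : TY) = tmk p (g.1 x) + tmk p (g.1 x')
        rw [g.2.map_add, tmk_add_right])
      (fun p s x => by
        show (tmk ((op s) • p) (g.1 x) : TY) = tmk p (g.1 (s • x))
        rw [tmk_smul, g.2.map_smul])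
  have hτlh : IsLHom R (fun t : TX => τ t) :=
    tlift_lhom R _ _ _ _ (fun r p x => (tsmul_tmk R r p (g.1 x)).symm)
  have hτsm : ∀ (r : R) (t : TX), τ (r • t) = r • τ t := hτlh.map_smul
  have hτmk : ∀ (p : P) (x : X.carrier), τ (tmk p x) = tmk p (g.1 x) :=
    fun p x => tlift_tmk _ _ _ _ p x
  -- the map `F : TX → N` induced by `fq` via the adjunction
  let F : TX →+ N.carrier :=
    tlift (fun p x => ((fq.1 x).1).1 p)
      (fun p p' x => ((fq.1 x).1).2.map_add p p')
      (fun p x x' => by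
        show ((fq.1 (x + x')).1).1 p = ((fq.1 x).1).1 p + ((fq.1 x').1).1 p
        rw [fq.2.map_add]; rfl)
      (fun p s x => by
        show ((fq.1 x).1).1 ((op s) • p) = ((fq.1 (s • x)).1).1 p
        rw [fq.2.map_smul]; rfl)
  have hFlh : IsLHom R (fun t : TX => F t) :=
    tlift_lhom R _ _ _ _ (fun r p x => ((fq.1 x).1).2.map_smul r p)
  have hFsm : ∀ (r : R) (t : TX), F (r • t) = r • F t := hFlh.map_smul
  have hFmk : ∀ (p : P) (x : X.carrier), F (tmk p x) = ((fq.1 x).1).1 p :=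
    fun p x => tlift_tmk _ _ _ _ p x
  -- injectivity of the unit on `Y`
  have hINJ : ∀ y : Y.carrier, (∀ p : P, (tmk p y : TY) = 0) → y = 0 := by
    intro y hy
    obtain ⟨e, hee, hey⟩ := exists_idem_unit Y.unitary y
    obtain ⟨κ, fκ, ϑ, w, c, hϑa, hϑs, hsum, hc⟩ :=
      dual_basis hlp S hSEnd hfg e.1 e.2 (congrArg Subtype.val hee)
    letI := fκ
    -- the retraction maps `Γ k : TY → Y`
    have hΓ : ∀ k : κ, ∃ Γ : TY →+ Y.carrier,
        ∀ (p : P) (y' : Y.carrier), Γ (tmk p y') = (c k p) • y' := by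
      intro k
      have hcadd : ∀ p p' : P, c k (p + p') = c k p + c k p' := by
        intro p p'
        apply Subtype.ext; apply LinMap.ext; funext q
        show ((c k (p + p') : LinMap R P P)).1 q =
          ((c k p : LinMap R P P)).1 q + ((c k p' : LinMap R P P)).1 q
        rw [hc, hc, hc, LMod.smul_add']
      have hcs : ∀ (p : P) (s : ↥S), c k ((op s) • p) = c k p * s := by
        intro p s
        apply Subtype.ext; apply LinMap.ext; funext q
        show ((c k ((op s) • p) : LinMap R P P)).1 q =
          ((s : LinMap R P P)).1 (((c k p : LinMap R P P)).1 q)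
        rw [hc, hc, ← hact, smul_comm]
      refine ⟨tlift (fun p y' => (c k p) • y')
        (fun p p' y' => by
          show (c k (p + p')) • y' = (c k p) • y' + (c k p') • y'
          rw [hcadd, LMod.add_smul'])
        (fun p y' y'' => by
          show (c k p) • (y' + y'') = (c k p) • y' + (c k p) • y''
          rw [LMod.smul_add'])
        (fun p s y' => by
          show (c k ((op s) • p)) • y' = (c k p) • (s • y')
          rw [hcs, LMod.mul_smul']), fun p y' => tlift_tmk _ _ _ _ p y'⟩
    choose Γ hΓmk using hΓ
    have h1 : ∀ k : κ, (c k (w k)) • y = 0 := by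
      intro k
      have h2 := hΓmk k (w k) y
      rw [hy (w k), map_zero] at h2
      exact h2.symm
    have h2 : e = ∑ k : κ, c k (w k) := by
      apply Subtype.ext
      have hcoe : ((∑ k : κ, c k (w k) : ↥S) : LinMap R P P) =
          ∑ k : κ, (c k (w k) : LinMap R P P) :=
        map_sum (AddMonoidHom.mk' (Subtype.val : ↥S → LinMap R P P) (fun a b => rfl)) _ _
      rw [hcoe]
      apply LinMap.ext; funext q
      have hev : (∑ k : κ, (c k (w k) : LinMap R P P)).1 q =
          ∑ k : κ, ((c k (w k) : LinMap R P P)).1 q :=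
        map_sum (AddMonoidHom.mk' (fun m : LinMap R P P => m.1 q) (fun a b => rfl)) _ _
      rw [hev]
      rw [hsum q]
      exact Finset.sum_congr rfl fun k _ => (hc k (w k) q).symm
    calc y = e • y := hey.symm
      _ = (∑ k : κ, c k (w k)) • y := by rw [← h2]
      _ = ∑ k : κ, (c k (w k)) • y := LMod.sum_smul' _ _ _
      _ = 0 := by rw [Finset.sum_congr rfl fun k _ => h1 k, Finset.sum_const_zero]
  -- surjectivity of the unit on `X`
  have hSURJ : ∀ ξ : LinMap R P TX, ξ ∈ umax ↥S (LinMap R P TX) →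
      ∃ x₀ : X.carrier, ∀ p : P, ξ.1 p = tmk p x₀ := by
    intro ξ hξ
    obtain ⟨e, hee, heξ⟩ := exists_idem_unit
      (umax_unitary (C := ↥S) (H := LinMap R P TX)) ⟨ξ, hξ⟩
    obtain ⟨κ, fκ, ϑ, w, c, hϑa, hϑs, hsum, hc⟩ :=
      dual_basis hlp S hSEnd hfg e.1 e.2 (congrArg Subtype.val hee)
    letI := fκ
    have hdec : ∀ (k : κ) (v : TX), ∃ x' : X.carrier, ∀ p : P, (ϑ k p) • v = tmk p x' := by
      intro k v
      induction v using Ten.ind with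
      | hmk p' x' =>
        refine ⟨(c k p') • x', fun p => ?_⟩
        rw [tsmul_tmk]
        have h1 : (ϑ k p) • p' = (op (c k p')) • p := by rw [hact]; exact (hc k p' p).symm
        rw [h1, tmk_smul]
      | hzero => exact ⟨0, fun p => by rw [LMod.smul_zero', tmk_zero_right]⟩
      | hadd a b ha hb =>
        obtain ⟨x1, hx1⟩ := ha
        obtain ⟨x2, hx2⟩ := hb
        exact ⟨x1 + x2, fun p => by rw [LMod.smul_add', hx1, hx2, tmk_add_right]⟩
      | hneg a ha =>
        obtain ⟨x1, hx1⟩ := ha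
        exact ⟨-x1, fun p => by rw [LMod.smul_neg', hx1, tmk_neg_right]⟩
    choose xs hxs using hdec
    refine ⟨∑ k : κ, xs k (ξ.1 (w k)), fun p => ?_⟩
    have h1 : ξ.1 p = ξ.1 ((op e : (↥S)ᵐᵒᵖ) • p) := by
      have h2 : (e • (⟨ξ, hξ⟩ : ↥(umax ↥S (LinMap R P TX)))).1 = ξ :=
        congrArg Subtype.val heξ
      exact (congrArg (fun m : LinMap R P TX => m.1 p) h2).symm
    rw [h1, hact, hsum p, ξ.2.map_sum]
    rw [tmk_sum_right]
    refine Finset.sum_congr rfl fun k _ => ?_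
    rw [ξ.2.map_smul, hxs]
  -- `F` kills the kernel of `τ`
  have hker : ∀ v : TX, τ v = 0 → F v = 0 := by
    intro v hv
    let W : AddSubgroup N.carrier :=
      { carrier := {n | ∃ v' : TX, τ v' = 0 ∧ F v' = n}
        add_mem' := by
          rintro n1 n2 ⟨v1, hv1, rfl⟩ ⟨v2, hv2, rfl⟩
          exact ⟨v1 + v2, by rw [map_add, hv1, hv2, add_zero], map_add F v1 v2⟩
        zero_mem' := ⟨0, map_zero τ, map_zero F⟩
        neg_mem' := by
          rintro n ⟨v', hv', rfl⟩
          exact ⟨-v', by rw [map_neg, hv', neg_zero], map_neg F v'⟩ }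
    refine hst W ?_ ?_ (F v) ⟨v, hv, rfl⟩
    · rintro r n ⟨v', hv', rfl⟩
      exact ⟨r • v', by rw [hτsm, hv', LMod.smul_zero'], hFsm r v'⟩
    · intro s f hfW
      obtain ⟨e0, he0, hunit⟩ := HasLocalUnits.exists_unit ({s} : Finset ↥S)
      have hse : s * e0 = s := (hunit s (Finset.mem_singleton_self s)).2
      obtain ⟨κ, fκ, ϑ, w, c, hϑa, hϑs, hsum, hc⟩ :=
        dual_basis hlp S hSEnd hfg e0.1 e0.2 (congrArg Subtype.val he0)
      letI := fκ
      choose vts hvts using fun k : κ => hfW (w k)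
      let ξ0fun : P → TX := fun q => ∑ k : κ, (ϑ k q) • vts k
      have hξ0 : IsLHom R ξ0fun := by
        constructor
        · intro q q'
          show (∑ k : κ, (ϑ k (q + q')) • vts k) = _
          rw [← Finset.sum_add_distrib]
          exact Finset.sum_congr rfl fun k _ => by rw [hϑa, LMod.add_smul']
        · intro r q
          show (∑ k : κ, (ϑ k (r • q)) • vts k) = r • ∑ k : κ, (ϑ k q) • vts k
          rw [LMod.smul_sum]
          exact Finset.sum_congr rfl fun k _ => by
            rw [hϑs, LMod.mul_smul']
      have hτξ0 : ∀ q : P, τ (ξ0fun q) = 0 := by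
        intro q
        show τ (∑ k : κ, (ϑ k q) • vts k) = 0
        rw [map_sum]
        rw [Finset.sum_congr rfl fun k _ => by
          rw [hτsm, (hvts k).1, LMod.smul_zero']]
        exact Finset.sum_const_zero
      have hFξ0 : ∀ q : P, F (ξ0fun q) = f.1 ((e0 : LinMap R P P).1 q) := by
        intro q
        show F (∑ k : κ, (ϑ k q) • vts k) = _
        rw [map_sum, hsum q, f.2.map_sum]
        exact Finset.sum_congr rfl fun k _ => by
          rw [hFsm, (hvts k).2, f.2.map_smul]
      let ξ0 : LinMap R P TX := ⟨ξ0fun, hξ0⟩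
      have hmem : (s • ξ0) ∈ umax ↥S (LinMap R P TX) := smul_mem_umax s ξ0
      obtain ⟨x₀, hx₀⟩ := hSURJ _ hmem
      have hy0 : ∀ p : P, (tmk p (g.1 x₀) : TY) = 0 := by
        intro p
        rw [← hτmk p x₀, ← hx₀ p]
        show τ (ξ0fun ((op s) • p)) = 0
        exact hτξ0 _
      have hx00 : x₀ = 0 := by
        have hgx := hINJ (g.1 x₀) hy0
        exact hginj (by rw [hgx, g.2.map_zero])
      apply LinMap.ext; funext p
      show f.1 ((op s) • p) = 0
      have h3 : (op s : (↥S)ᵐᵒᵖ) • p = (e0 : LinMap R P P).1 ((op s) • p) := by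
        rw [hact]
        exact (congrArg (fun m : LinMap R P P => m.1 p) (congrArg Subtype.val hse)).symm
      rw [h3, ← hFξ0]
      have h4 : ξ0fun ((op s) • p) = (s • ξ0).1 p := rfl
      rw [h4, hx₀ p, hx00, tmk_zero_right, map_zero]
  -- the image of `τ` as a unitary module
  let Mim : AddSubgroup TY := τ.range
  have hMst : ∀ (r : R) (m : TY), m ∈ Mim → r • m ∈ Mim := by
    rintro r m ⟨v, rfl⟩
    exact ⟨r • v, hτsm r v⟩
  letI : LMod R ↥Mim :=
    { smul := fun r m => ⟨r • m.1, hMst r m.1 m.2⟩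
      smul_add' := fun r m n => Subtype.ext (LMod.smul_add' r m.1 n.1)
      add_smul' := fun r r' m => Subtype.ext (LMod.add_smul' r r' m.1)
      mul_smul' := fun r r' m => Subtype.ext (LMod.mul_smul' r r' m.1) }
  have hTYu : IsUnitary R TY := Ten.unitary R (hPu := hPu)
  have hMu : IsUnitary R ↥Mim := by
    intro m
    obtain ⟨e, hee, hem⟩ := exists_idem_unit hTYu m.1
    have hmeq : m = e • m := Subtype.ext hem.symm
    have hmem2 : e • m ∈ AddSubgroup.closure
        {x : ↥Mim | ∃ (r : R) (n : ↥Mim), x = r • n} :=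
      AddSubgroup.subset_closure ⟨e, m, rfl⟩
    rwa [← hmeq] at hmem2
  let Mobj : UMod.{u, u} R := ⟨↥Mim, hMu⟩
  let TYobj : UMod.{u, u} R := ⟨TY, hTYu⟩
  -- the induced map `Mobj → N`
  have hprex : ∀ m : ↥Mim, ∃ v : TX, τ v = m.1 := fun m => m.2
  choose pre hpre using hprex
  have hFeq : ∀ (m : ↥Mim) (v : TX), τ v = m.1 → F v = F (pre m) := by
    intro m v hv
    have h1 : τ (v - pre m) = 0 := by rw [map_sub, hv, hpre, sub_self]
    have h2 := hker _ h1
    rw [map_sub, sub_eq_zero] at h2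
    exact h2
  let Fbar : Mobj ⟶ N := ⟨fun m => F (pre m),
    ⟨fun m m' => by
      have h1 : τ (pre m + pre m') = (m + m').1 := by
        rw [map_add, hpre, hpre]; rfl
      rw [← hFeq (m + m') _ h1, map_add],
     fun r m => by
      have h1 : τ (r • pre m) = (r • m).1 := by
        rw [hτsm, hpre]; rfl
      rw [← hFeq (r • m) _ h1, hFsm]⟩⟩
  let emb : Mobj ⟶ TYobj := ⟨fun m => m.1, ⟨fun m m' => rfl, fun r m => rfl⟩⟩
  haveI : Mono emb := UMod.mono_of_injective emb (fun a b hab => Subtype.ext hab)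
  obtain ⟨G, hG⟩ := hinj.factors Fbar emb
  -- the extension `Y ⟶ SHom(P, N)`
  have hY1 : ∀ y : Y.carrier, IsLHom R (fun p : P => G.1 (tmk p y)) := by
    intro y
    constructor
    · intro p p'
      rw [tmk_add_left, G.2.map_add]
    · intro r p
      rw [← tsmul_tmk R r p y, G.2.map_smul]
  let yh : Y.carrier → LinMap R P N.carrier := fun y => ⟨fun p : P => G.1 (tmk p y), hY1 y⟩
  have hYmem : ∀ y : Y.carrier, yh y ∈ umax ↥S (LinMap R P N.carrier) := by
    intro y
    have hgen := Y.unitary y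
    induction hgen using AddSubgroup.closure_induction with
    | mem y' hy' =>
      obtain ⟨s, y'', rfl⟩ := hy'
      have heq2 : yh (s • y'') = s • yh y'' := by
        apply LinMap.ext; funext p
        show G.1 (tmk p (s • y'')) = G.1 (tmk ((op s) • p) y'')
        rw [tmk_smul]
      rw [heq2]
      exact smul_mem_umax s _
    | zero =>
      have heq2 : yh (0 : Y.carrier) = 0 := by
        apply LinMap.ext; funext p
        show G.1 (tmk p (0 : Y.carrier)) = 0
        rw [tmk_zero_right, G.2.map_zero]
      rw [heq2]; exact AddSubgroup.zero_mem _
    | add y1 y2 h1 h2 ih1 ih2 =>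
      have heq2 : yh (y1 + y2) = yh y1 + yh y2 := by
        apply LinMap.ext; funext p
        show G.1 (tmk p (y1 + y2)) = G.1 (tmk p y1) + G.1 (tmk p y2)
        rw [tmk_add_right, G.2.map_add]
      rw [heq2]; exact AddSubgroup.add_mem _ ih1 ih2
    | neg y1 h1 ih1 =>
      have heq2 : yh (-y1) = -(yh y1) := by
        apply LinMap.ext; funext p
        show G.1 (tmk p (-y1)) = -(G.1 (tmk p y1))
        rw [tmk_neg_right, G.2.map_neg]
      rw [heq2]; exact AddSubgroup.neg_mem _ ih1
  let hmor : Y ⟶ (sHomF R ↥S P).obj N :=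
    ⟨fun y => ⟨yh y, hYmem y⟩,
     ⟨fun y y' => by
        apply Subtype.ext; apply LinMap.ext; funext p
        show G.1 (tmk p (y + y')) = G.1 (tmk p y) + G.1 (tmk p y')
        rw [tmk_add_right, G.2.map_add],
      fun s y => by
        apply Subtype.ext; apply LinMap.ext; funext p
        show G.1 (tmk p (s • y)) = G.1 (tmk ((op s) • p) y)
        rw [tmk_smul]⟩⟩
  refine ⟨hmor, ?_⟩
  apply LinMap.ext; funext x
  apply Subtype.ext; apply LinMap.ext; funext p
  show G.1 (tmk p (g.1 x)) = ((fq.1 x).1).1 p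
  have h1 : (tmk p (g.1 x) : TY) = τ (tmk p x) := (hτmk p x).symm
  have h2 : G.1 (τ (tmk p x)) = F (tmk p x) := by
    have hm : τ (tmk p x) ∈ Mim := ⟨tmk p x, rfl⟩
    have h3 : G.1 ((⟨τ (tmk p x), hm⟩ : ↥Mim) : TY) = F (pre ⟨τ (tmk p x), hm⟩) :=
      congrArg (fun m : LinMap R Mobj.carrier N.carrier => m.1 ⟨τ (tmk p x), hm⟩) hG
    have h4 : F (tmk p x) = F (pre ⟨τ (tmk p x), hm⟩) := hFeq _ _ rfl
    rw [← h4] at h3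
    exact h3
  rw [h1, h2, hFmk]
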